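/- arXiv:2508.12578 — 7 statements merged into one kernel-verified Lean document; each statement's English description precedes it below -/
import Mathlib

section
/- Let r ≥ 1 be an integer. For all sufficiently large n, the maximum number of edges in a non-bipartite B_{r+1}-free simple graph on n vertices equals ⌊(n−1)²/4⌋ + 2r. -/
open SimpleGraph Set

/-- `G` contains no book `B_{r+1}`, i.e. no two adjacent vertices of `G` have at least
`r + 1` common neighbours. -/
def BookFree {V : Type*} (r : ℕ) (G : SimpleGraph V) : Prop :=
  ∀ u v : V, G.Adj u v → ({w : V | G.Adj u w ∧ G.Adj v w}).ncard ≤ r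

/-
Let `G` be a non-bipartite `B_{r+1}`-free graph on `n` vertices and `C` a shortest odd cycle.
If `|C| ≥ 5`, every vertex sees at most two vertices of `C` and `G - C` is triangle-free, so
Mantel's theorem gives `e(G) ≤ ⌊(n-1)²/4⌋ + 1`. If `C` is a triangle `T`, the edges of `T` have
fewer than `r` common neighbours outside `T`, whence `e(T, G - T) ≤ n + 3r - 6`. So if `e(G)`
exceeds the claimed bound, `G - T` has at least `⌊(n-3)²/4⌋ - r + 2` edges. A book-free graph
that dense is bipartite: otherwise it has a triangle, and removing it leaves too many edges for
the rough bound `e ≤ m²/4 + (6r+6)²`, which holds because deleting vertices of small degree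
eventually leaves a triangle-free graph. So `G - T` is a nearly complete bipartite graph on
parts `P`, `Q`. Book-freeness then lets each vertex of `T` have many neighbours on at most one
side, which gives `e(G) ≤ (|P|+1)(|Q|+1) + 2r ≤ ⌊(n-1)²/4⌋ + 2r`. The bound is attained by
`K_{⌈(n-1)/2⌉,⌊(n-1)/2⌋}` plus a vertex joined to `r` vertices on each side.
-/

open Finset

namespace Nat

lemma sq_div_four_eq_sub_one {m : ℕ} (h : 1 ≤ m) : m ^ 2 / 4 = (m - 1) ^ 2 / 4 + m / 2 := by
  obtain ⟨t, rfl | rfl⟩ := Nat.even_or_odd' m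
  · obtain ⟨u, rfl⟩ : ∃ u, t = u + 1 := ⟨t - 1, by omega⟩
    rw [show 2 * (u + 1) - 1 = 2 * u + 1 by omega,
      show (2 * (u + 1)) ^ 2 = 4 * (u * u + 2 * u + 1) by ring,
      show (2 * u + 1) ^ 2 = 4 * (u * u + u) + 1 by ring]
    omega
  · rw [show 2 * t + 1 - 1 = 2 * t by omega, show (2 * t + 1) ^ 2 = 4 * (t * t + t) + 1 by ring,
      show (2 * t) ^ 2 = 4 * (t * t) by ring]
    omega

lemma sq_div_four_eq_sub_two {m : ℕ} (h : 2 ≤ m) : m ^ 2 / 4 = (m - 2) ^ 2 / 4 + (m - 1) := by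
  obtain ⟨k, rfl⟩ : ∃ k, m = k + 2 := ⟨m - 2, by omega⟩
  rw [show (k + 2) ^ 2 = k ^ 2 + (k + 1) * 4 by ring, Nat.add_mul_div_right _ _ (by norm_num)]
  simp

lemma mul_le_add_sq_div_four (a b : ℕ) : a * b ≤ (a + b) ^ 2 / 4 :=
  (Nat.le_div_iff_mul_le (by norm_num)).mpr (by linarith [four_mul_le_sq_add a b])

lemma sub_div_two_mul_div_two (m : ℕ) : (m - m / 2) * (m / 2) = m ^ 2 / 4 := by
  obtain ⟨t, rfl | rfl⟩ := Nat.even_or_odd' m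
  · rw [show 2 * t - 2 * t / 2 = t by omega, show 2 * t / 2 = t by omega,
      show (2 * t) ^ 2 = t * t * 4 by ring, Nat.mul_div_cancel _ (by norm_num)]
  · rw [show 2 * t + 1 - (2 * t + 1) / 2 = t + 1 by omega, show (2 * t + 1) / 2 = t by omega,
      show (2 * t + 1) ^ 2 = 1 + (t + 1) * t * 4 by ring, Nat.add_mul_div_right _ _ (by norm_num)]
    simp

lemma eq_zero_of_mul_le_mul_add {p q r μ : ℕ} (h : q * p ≤ q * r + μ) (hp : r + μ < p) :
    q = 0 := by
  by_contra hq
  have : q * (r + μ + 1) ≤ q * p := Nat.mul_le_mul_left q hp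
  have : μ ≤ q * μ := Nat.le_mul_of_pos_left μ (by omega)
  have : q * (r + μ + 1) = q * r + q * μ + q := by ring
  omega

lemma lt_add_of_sq_div_four_add_le {a b r μ : ℕ} (h : (a + b) ^ 2 / 4 + μ + 2 ≤ a * b + r) :
    a < b + (r + μ) := by
  by_contra! hle
  obtain ⟨e, rfl⟩ : ∃ e, a = b + e := ⟨a - b, by omega⟩
  rw [show (b + e + b) ^ 2 = 4 * ((b + e) * b) + e * e by ring, Nat.mul_add_div (by norm_num)] at h
  have hee : (r + μ) * (r + μ) ≤ e * e := Nat.mul_le_mul (by omega) (by omega)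
  have hrr : 4 * r ≤ r * r + 4 := by zify; nlinarith [sq_nonneg ((r : ℤ) - 2)]
  have hexp : (r + μ) * (r + μ) = r * r + 2 * (r * μ) + μ * μ := by ring
  omega

lemma sq_sub_div_four_add_le {m ℓ : ℕ} (h5 : 5 ≤ ℓ) (hodd : Odd ℓ) (hm : ℓ ≤ m) :
    (m - ℓ) ^ 2 / 4 + 2 * (m - ℓ) + ℓ ≤ (m - 1) ^ 2 / 4 + 1 := by
  obtain ⟨k, rfl⟩ := hodd
  obtain ⟨x, rfl⟩ : ∃ x, m = x + 2 * k + 1 := ⟨m - (2 * k + 1), by omega⟩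
  rw [show (x + 2 * k + 1 - 1) ^ 2 = x ^ 2 + 4 * (k * (x + k)) by rw [Nat.add_sub_cancel]; ring,
    Nat.add_mul_div_left _ _ (by norm_num), show x + 2 * k + 1 - (2 * k + 1) = x by omega]
  have : 2 * (x + k) ≤ k * (x + k) := Nat.mul_le_mul_right _ (by omega)
  omega

end Nat

lemma Fin.sum_ite_val_lt (n r : ℕ) [∀ i : Fin n, Decidable ((i : ℕ) < r)] :
    (∑ i : Fin n, if (i : ℕ) < r then 1 else 0) = min n r := by
  rw [sum_boole, Nat.cast_id]
  convert Fin.card_filter_val_lt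

lemma Fin.ncard_setOf_val_lt_le (n r : ℕ) : {i : Fin n | (i : ℕ) < r}.ncard ≤ r := by
  rw [Set.ncard_eq_toFinset_card']
  simp [Fin.card_filter_val_lt]

lemma Finset.card_add_card_add_card_le {α : Type*} [DecidableEq α] {A B C E : Finset α}
    (hA : A ⊆ E) (hB : B ⊆ E) (hC : C ⊆ E) :
    #A + #B + #C ≤ #E + #(A ∩ B) + #(A ∩ C) + #(B ∩ C) := by
  have h₁ := card_union_add_card_inter A B
  have h₂ := card_union_add_card_inter (A ∪ B) C
  have h₃ := card_union_le (A ∩ C) (B ∩ C)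
  have h₄ := Finset.card_le_card (union_subset (union_subset hA hB) hC)
  rw [union_inter_distrib_right] at h₂
  omega

namespace SimpleGraph

variable {V : Type*} {G : SimpleGraph V}

variable (G) in
def TriangleFreeOn (s : Finset V) : Prop :=
  ∀ x ∈ s, ∀ y ∈ s, ∀ z ∈ s, G.Adj x y → G.Adj y z → ¬ G.Adj x z

lemma TriangleFreeOn.mono {s t : Finset V} (h : G.TriangleFreeOn s) (hts : t ⊆ s) :
    G.TriangleFreeOn t :=
  fun x hx y hy z hz => h x (hts hx) y (hts hy) z (hts hz)

lemma TriangleFreeOn.cliqueFree_induce {s : Finset V} (h : G.TriangleFreeOn s) :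
    (G.induce (s : Set V)).CliqueFree 3 := by
  classical
  intro t ht
  obtain ⟨x, y, z, hxy, hxz, hyz, -⟩ := is3Clique_iff.mp ht
  exact h x.1 x.2 y.1 y.2 z.1 z.2 hxy hyz hxz

section Walks

/- Walks are sequences `c : ℕ → V`, so that the arcs of a closed walk are obtained by index
arithmetic. -/
variable (G) in
def IsWalkIn (s : Finset V) (c : ℕ → V) (k : ℕ) : Prop :=
  (∀ i ≤ k, c i ∈ s) ∧ ∀ i < k, G.Adj (c i) (c (i + 1))

variable (G) in
def HasWalkIn (s : Finset V) (u v : V) (k : ℕ) : Prop :=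
  ∃ c, G.IsWalkIn s c k ∧ c 0 = u ∧ c k = v

variable {s : Finset V} {u v w : V} {k l : ℕ}

lemma HasWalkIn.of_adj (h : G.Adj u v) (hu : u ∈ s) (hv : v ∈ s) : G.HasWalkIn s u v 1 := by
  refine ⟨fun i => if i = 0 then u else v, ⟨fun i _ => ?_, fun i hi => ?_⟩, rfl, rfl⟩
  · dsimp only
    split <;> assumption
  · obtain rfl : i = 0 := by omega
    simpa using h

lemma HasWalkIn.trans (h₁ : G.HasWalkIn s u v k) (h₂ : G.HasWalkIn s v w l) :
    G.HasWalkIn s u w (k + l) := by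
  obtain ⟨c, ⟨hcm, hca⟩, rfl, rfl⟩ := h₁
  obtain ⟨d, ⟨hdm, hda⟩, hd0, rfl⟩ := h₂
  refine ⟨fun i => if i ≤ k then c i else d (i - k), ⟨fun i hi => ?_, fun i hi => ?_⟩, by simp, ?_⟩
  · dsimp only
    split
    · exact hcm _ (by omega)
    · exact hdm _ (by omega)
  · rcases lt_trichotomy i k with h | rfl | h
    · simpa [h.le, h] using hca i h
    · simpa [← hd0] using hda 0 (by omega)
    · simpa [show ¬ i ≤ k by omega, show ¬ i < k by omega,
        show i + 1 - k = i - k + 1 by omega] using hda (i - k) (by omega)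
  · rcases Nat.eq_zero_or_pos l with rfl | hl
    · simp [hd0]
    · simp [show l ≠ 0 by omega]

lemma IsWalkIn.hasWalkIn {c : ℕ → V} (hw : G.IsWalkIn s c k) {i j : ℕ} (hij : i ≤ j)
    (hj : j ≤ k) : G.HasWalkIn s (c i) (c j) (j - i) := by
  refine ⟨fun t => c (i + t), ⟨fun t _ => hw.1 _ (by omega), fun t _ => ?_⟩, by simp, ?_⟩
  · simpa only [add_assoc] using hw.2 (i + t) (by omega)
  · simp only [show i + (j - i) = j by omega]

lemma IsWalkIn.hasWalkIn_around {c : ℕ → V} (hw : G.IsWalkIn s c k) (hcl : c k = c 0)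
    {i j : ℕ} (hij : i ≤ j) (hj : j ≤ k) : G.HasWalkIn s (c j) (c i) (k - j + i) := by
  have h₁ := hw.hasWalkIn hj le_rfl
  have h₂ := hw.hasWalkIn (Nat.zero_le i) (hij.trans hj)
  rw [hcl] at h₁
  simpa using h₁.trans h₂

variable (G) in
structure IsShortestOddClosedWalk (s : Finset V) (c : ℕ → V) (ℓ : ℕ) : Prop where
  isWalkIn : G.IsWalkIn s c ℓ
  closed : c ℓ = c 0
  odd : Odd ℓ
  le_of_odd : ∀ j u, Odd j → G.HasWalkIn s u u j → ℓ ≤ j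

lemma exists_isShortestOddClosedWalk (h : ¬ (G.induce (s : Set V)).Colorable 2) :
    ∃ c ℓ, G.IsShortestOddClosedWalk s c ℓ := by
  classical
  have hex : ∃ k, Odd k ∧ ∃ u, G.HasWalkIn s u u k := by
    obtain ⟨u, w, hw⟩ : ∃ u, ∃ w : (G.induce (s : Set V)).Walk u u, ¬ Even w.length := by
      simpa [two_colorable_iff_forall_loop_even] using h
    refine ⟨w.length, Nat.not_even_iff_odd.mp hw, u, fun i => (w.getVert i).1,
      ⟨fun i _ => (w.getVert i).2, fun i hi => w.adj_getVert_succ hi⟩, by simp, by simp⟩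
  obtain ⟨hodd, u, c, hw, hc0, hcℓ⟩ := Nat.find_spec hex
  exact ⟨c, Nat.find hex,
    ⟨hw, hcℓ.trans hc0.symm, hodd, fun j u hj hu => Nat.find_min' hex ⟨hj, u, hu⟩⟩⟩

namespace IsShortestOddClosedWalk

variable {c : ℕ → V} {ℓ : ℕ} (hc : G.IsShortestOddClosedWalk s c ℓ)
include hc

lemma mem {i : ℕ} (hi : i ≤ ℓ) : c i ∈ s := hc.isWalkIn.1 i hi

lemma three_le : 3 ≤ ℓ := by
  obtain ⟨t, ht⟩ := hc.odd
  rcases Nat.eq_zero_or_pos t with rfl | hpos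
  · have := hc.isWalkIn.2 0 (by omega)
    simp only [ht, zero_add, mul_zero] at this hc
    exact absurd (hc.closed ▸ this) (G.irrefl)
  · omega

lemma odd_le_or_odd_le {a b : ℕ} (hab : Odd (a + b)) (ha : G.HasWalkIn s u u a)
    (hb : G.HasWalkIn s w w b) : (Odd a ∧ ℓ ≤ a) ∨ (Odd b ∧ ℓ ≤ b) := by
  rcases Nat.even_or_odd a with he | ho
  · have hb' : Odd b := (Nat.odd_add'.mp hab).mpr he
    exact .inr ⟨hb', hc.le_of_odd _ _ hb' hb⟩
  · exact .inl ⟨ho, hc.le_of_odd _ _ ho ha⟩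

lemma injOn : Set.InjOn c (Finset.range ℓ) := by
  intro i hi j hj heq
  simp only [coe_range, Set.mem_Iio] at hi hj
  by_contra hne
  wlog hij : i < j generalizing i j
  · exact this heq.symm hj hi (Ne.symm hne) (by omega)
  have h₁ := hc.isWalkIn.hasWalkIn hij.le hj.le
  have h₂ := hc.isWalkIn.hasWalkIn_around hc.closed hij.le hj.le
  rw [← heq] at h₁ h₂
  have := hc.odd_le_or_odd_le (by convert hc.odd using 1; omega) h₁ h₂
  omega

/-- Two vertices of the cycle with a common neighbour are at distance two along it. -/
lemma index_of_adj_of_adj (hv : v ∈ s) {i j : ℕ} (hi : i < ℓ) (hj : j < ℓ) (hij : i ≠ j)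
    (hvi : G.Adj v (c i)) (hvj : G.Adj v (c j)) :
    i + 2 = j ∨ j + 2 = i ∨ i + (ℓ - 2) = j ∨ j + (ℓ - 2) = i := by
  wlog hlt : i < j generalizing i j
  · have := this hj hi hij.symm hvj hvi (by omega)
    omega
  have h₁ := ((HasWalkIn.of_adj hvi hv (hc.mem hi.le)).trans
    (hc.isWalkIn.hasWalkIn hlt.le hj.le)).trans (.of_adj hvj.symm (hc.mem hj.le) hv)
  have h₂ := ((HasWalkIn.of_adj hvj hv (hc.mem hj.le)).trans
    (hc.isWalkIn.hasWalkIn_around hc.closed hlt.le hj.le)).trans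
    (.of_adj hvi.symm (hc.mem hi.le) hv)
  have := hc.odd
  have := hc.odd_le_or_odd_le (by convert hc.odd.add_even (even_two_mul 2) using 1; omega) h₁ h₂
  simp only [Nat.odd_iff] at *
  omega

lemma triangleFreeOn (h5 : 5 ≤ ℓ) : G.TriangleFreeOn s := by
  intro x hx y hy z hz hxy hyz hxz
  have := hc.le_of_odd 3 x (by decide)
    (((HasWalkIn.of_adj hxy hx hy).trans (.of_adj hyz hy hz)).trans (.of_adj hxz.symm hz hx))
  omega

lemma exists_triangle (h5 : ℓ < 5) :
    ∃ x ∈ s, ∃ y ∈ s, ∃ z ∈ s, G.Adj x y ∧ G.Adj y z ∧ G.Adj x z := by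
  obtain rfl : ℓ = 3 := by
    have := hc.three_le
    have := Nat.odd_iff.mp hc.odd
    omega
  have h02 := hc.isWalkIn.2 2 (by omega)
  rw [hc.closed] at h02
  exact ⟨c 0, hc.mem (by omega), c 1, hc.mem (by omega), c 2, hc.mem (by omega),
    hc.isWalkIn.2 0 (by omega), hc.isWalkIn.2 1 (by omega), h02.symm⟩

end IsShortestOddClosedWalk

end Walks

section

variable [DecidableEq V]

lemma card_triangle {x y z : V} (hxy : G.Adj x y) (hyz : G.Adj y z) (hxz : G.Adj x z) :
    #({x, y, z} : Finset V) = 3 := by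
  rw [card_insert_of_notMem (by simp [G.ne_of_adj hxy, G.ne_of_adj hxz]),
    card_insert_of_notMem (by simp [G.ne_of_adj hyz]), Finset.card_singleton]

lemma card_sdiff_triangle {s : Finset V} {x y z : V} (hx : x ∈ s) (hy : y ∈ s) (hz : z ∈ s)
    (hxy : G.Adj x y) (hyz : G.Adj y z) (hxz : G.Adj x z) : #(s \ {x, y, z}) = #s - 3 := by
  have hT : {x, y, z} ⊆ s := by
    simp only [Finset.insert_subset_iff, Finset.singleton_subset_iff]
    exact ⟨hx, hy, hz⟩
  rw [card_sdiff_of_subset hT, card_triangle hxy hyz hxz]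

lemma exists_bipartition_of_colorable {s : Finset V} (h : (G.induce (s : Set V)).Colorable 2) :
    ∃ P ⊆ s, (∀ u ∈ P, ∀ v ∈ P, ¬ G.Adj u v) ∧ ∀ u ∈ s \ P, ∀ v ∈ s \ P, ¬ G.Adj u v := by
  obtain ⟨C⟩ := h
  let color : V → Fin 2 := fun v => if hv : v ∈ s then C ⟨v, hv⟩ else 0
  have hcolor : ∀ u ∈ s, ∀ v ∈ s, G.Adj u v → color u ≠ color v := fun u hu v hv huv => by
    simpa [color, hu, hv] using (C.valid (v := ⟨v, hv⟩) (w := ⟨u, hu⟩) huv.symm).symm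
  refine ⟨{v ∈ s | color v = 0}, filter_subset _ _, fun u hu v hv huv => ?_,
    fun u hu v hv huv => ?_⟩
  · simp only [mem_filter] at hu hv
    exact hcolor u hu.1 v hv.1 huv (hu.2.trans hv.2.symm)
  · simp only [Finset.mem_sdiff, mem_filter, not_and] at hu hv
    exact hcolor u hu.1 v hv.1 huv (by have := hu.2 hu.1; have := hv.2 hv.1; omega)

end

section Counting

variable [DecidableRel G.Adj]

variable (G) in
def nbrsIn (s : Finset V) (v : V) : Finset V := {w ∈ s | G.Adj v w}

@[simp]
lemma mem_nbrsIn {s : Finset V} {v w : V} : w ∈ G.nbrsIn s v ↔ w ∈ s ∧ G.Adj v w :=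
  mem_filter

variable (G) in
lemma nbrsIn_subset (s : Finset V) (v : V) : G.nbrsIn s v ⊆ s := filter_subset _ _

/- `G.interedges s t` consists of ordered pairs, so `#(G.interedges s s)` is twice the number of
edges inside `s`; edge counts below are in this doubled form. -/
lemma card_interedges_eq_sum (s t : Finset V) :
    #(G.interedges s t) = ∑ v ∈ s, #(G.nbrsIn t v) := by
  simp_rw [interedges_def, nbrsIn, card_filter, sum_product]

lemma card_interedges_comm (s t : Finset V) : #(G.interedges s t) = #(G.interedges t s) :=
  have := G.symm
  Rel.card_interedges_comm s t

lemma card_interedges_le_of_forall {t u : Finset V} {d : ℕ}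
    (h : ∀ v ∈ t, #(G.nbrsIn u v) ≤ d) : #(G.interedges t u) ≤ #t * d := by
  rw [card_interedges_eq_sum]
  exact sum_le_card_nsmul _ _ _ h

lemma card_interedges_eq_zero {s t : Finset V} (h : ∀ u ∈ s, ∀ v ∈ t, ¬ G.Adj u v) :
    #(G.interedges s t) = 0 := by
  rw [card_interedges_eq_sum]
  exact sum_eq_zero fun u hu => card_eq_zero.mpr (filter_eq_empty_iff.mpr fun v hv => h u hu v hv)

lemma card_interedges_univ [Fintype V] : #(G.interedges univ univ) = 2 * #G.edgeFinset := by
  rw [← sum_degrees_eq_twice_card_edges, card_interedges_eq_sum]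
  refine sum_congr rfl fun v _ => ?_
  rw [← card_neighborFinset_eq_degree, neighborFinset_eq_filter]
  rfl

lemma IsShortestOddClosedWalk.card_filter_adj_le_two {s : Finset V} {c : ℕ → V} {ℓ : ℕ}
    (hc : G.IsShortestOddClosedWalk s c ℓ) (h5 : 5 ≤ ℓ) {v : V} (hv : v ∈ s) :
    #{i ∈ range ℓ | G.Adj v (c i)} ≤ 2 := by
  by_contra! h
  obtain ⟨i, hi, j, hj, k, hk, hij, hik, hjk⟩ := two_lt_card.mp h
  simp only [mem_filter, Finset.mem_range] at hi hj hk
  have := hc.index_of_adj_of_adj hv hi.1 hj.1 hij hi.2 hj.2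
  have := hc.index_of_adj_of_adj hv hi.1 hk.1 hik hi.2 hk.2
  have := hc.index_of_adj_of_adj hv hj.1 hk.1 hjk hj.2 hk.2
  have := Nat.odd_iff.mp hc.odd
  omega

variable [DecidableEq V]

lemma card_nbrsIn_union {P Q : Finset V} (h : Disjoint P Q) (v : V) :
    #(G.nbrsIn (P ∪ Q) v) = #(G.nbrsIn P v) + #(G.nbrsIn Q v) := by
  rw [nbrsIn, filter_union, card_union_of_disjoint (disjoint_filter_filter h)]
  rfl

lemma card_nbrsIn_image_le (c : ℕ → V) (ℓ : ℕ) (v : V) :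
    #(G.nbrsIn ((range ℓ).image c) v) ≤ #{i ∈ range ℓ | G.Adj v (c i)} := by
  rw [nbrsIn, filter_image]
  exact card_image_le

lemma card_interedges_union_left {s s' : Finset V} (h : Disjoint s s') (t : Finset V) :
    #(G.interedges (s ∪ s') t) = #(G.interedges s t) + #(G.interedges s' t) := by
  simp_rw [card_interedges_eq_sum, sum_union h]

lemma card_interedges_union_right (s : Finset V) {t t' : Finset V} (h : Disjoint t t') :
    #(G.interedges s (t ∪ t')) = #(G.interedges s t) + #(G.interedges s t') := by
  simp_rw [card_interedges_comm s, card_interedges_union_left h]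

lemma card_interedges_self_eq {s t : Finset V} (h : t ⊆ s) :
    #(G.interedges s s) = #(G.interedges (s \ t) (s \ t)) + 2 * #(G.interedges t (s \ t))
      + #(G.interedges t t) := by
  have hd : Disjoint (s \ t) t := sdiff_disjoint
  conv_lhs => rw [← Finset.sdiff_union_of_subset h]
  rw [card_interedges_union_left hd, card_interedges_union_right _ hd,
    card_interedges_union_right _ hd, card_interedges_comm (s \ t) t]
  ring

lemma card_interedges_self_le (t : Finset V) : #(G.interedges t t) ≤ #t * (#t - 1) := by
  refine card_interedges_le_of_forall fun v hv => ?_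
  calc #(G.nbrsIn t v) ≤ #(t.erase v) :=
        Finset.card_le_card fun w hw => by
          simp only [mem_nbrsIn] at hw
          exact mem_erase.mpr ⟨(G.ne_of_adj hw.2).symm, hw.1⟩
    _ = #t - 1 := card_erase_of_mem hv

lemma card_interedges_self_erase {s : Finset V} {v : V} (hv : v ∈ s) :
    #(G.interedges s s) = #(G.interedges (s.erase v) (s.erase v)) + 2 * #(G.nbrsIn s v) := by
  have hself : #(G.interedges {v} {v}) = 0 := by
    simpa using card_interedges_self_le (G := G) {v}
  have hnbrs : G.nbrsIn (s.erase v) v = G.nbrsIn s v := by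
    ext w
    simp only [mem_nbrsIn, mem_erase]
    exact ⟨fun h => ⟨h.1.2, h.2⟩, fun h => ⟨⟨(G.ne_of_adj h.2).symm, h.1⟩, h.2⟩⟩
  rw [card_interedges_self_eq (Finset.singleton_subset_iff.mpr hv), hself, ← erase_eq,
    card_interedges_eq_sum {v}, sum_singleton, hnbrs, add_zero]

lemma card_interedges_le_of_triangle {s : Finset V} {x y z : V} (hx : x ∈ s) (hy : y ∈ s)
    (hz : z ∈ s) (hxy : G.Adj x y) (hyz : G.Adj y z) (hxz : G.Adj x z) :
    #(G.interedges s s) ≤ #(G.interedges (s \ {x, y, z}) (s \ {x, y, z}))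
      + 2 * (#(G.nbrsIn (s \ {x, y, z}) x) + #(G.nbrsIn (s \ {x, y, z}) y)
        + #(G.nbrsIn (s \ {x, y, z}) z)) + 6 := by
  have hT : {x, y, z} ⊆ s := by
    simp only [Finset.insert_subset_iff, Finset.singleton_subset_iff]
    exact ⟨hx, hy, hz⟩
  have hTT := card_interedges_self_le (G := G) {x, y, z}
  rw [card_triangle hxy hyz hxz] at hTT
  rw [card_interedges_self_eq hT, card_interedges_eq_sum {x, y, z},
    sum_insert (by simp [G.ne_of_adj hxy, G.ne_of_adj hxz]),
    sum_insert (by simp [G.ne_of_adj hyz]), sum_singleton]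
  omega

lemma card_interedges_induce (s : Finset V) :
    #(G.interedges s s) = 2 * #(G.induce (s : Set V)).edgeFinset := by
  rw [← sum_degrees_eq_twice_card_edges, card_interedges_eq_sum, ← sum_coe_sort s]
  refine Fintype.sum_congr _ _ fun v => ?_
  rw [← card_neighborFinset_eq_degree]
  refine card_nbij' (fun w => if h : w ∈ s then ⟨w, h⟩ else v) (fun w => w.1) ?_ ?_ ?_ ?_ <;>
    intro w hw <;> simp_all

/-- Mantel's theorem, as the case `r = 2` of Turán's theorem. -/
lemma TriangleFreeOn.card_interedges_le {s : Finset V} (h : G.TriangleFreeOn s) :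
    #(G.interedges s s) ≤ 2 * (#s ^ 2 / 4) := by
  have := h.cliqueFree_induce.card_edgeFinset_le (r := 2)
  rw [card_interedges_induce]
  have hcard : Fintype.card (s : Set V) = #s := by simp
  simp only [hcard] at this
  suffices (#s ^ 2 - (#s % 2) ^ 2) * (2 - 1) / (2 * 2) + (#s % 2).choose 2 = #s ^ 2 / 4 by omega
  obtain ⟨k, hk | hk⟩ := Nat.even_or_odd' #s <;> rw [hk]
  · rw [show 2 * k % 2 = 0 by omega]
    simp
  · rw [show (2 * k + 1) % 2 = 1 by omega, show (2 * k + 1) ^ 2 = 4 * (k * k + k) + 1 by ring,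
      one_pow, Nat.choose_succ_self]
    omega

namespace IsShortestOddClosedWalk

variable {s : Finset V} {c : ℕ → V} {ℓ : ℕ} (hc : G.IsShortestOddClosedWalk s c ℓ)
include hc

/-- The odd-girth bound: a shortest odd cycle `C` of length `≥ 5` sends at most two edges to
every vertex, and `s \ C` is triangle-free. -/
lemma card_interedges_le (h5 : 5 ≤ ℓ) : #(G.interedges s s) ≤ 2 * ((#s - 1) ^ 2 / 4 + 1) := by
  set C := (range ℓ).image c
  have hCs : C ⊆ s := by
    simp only [C, Finset.image_subset_iff, Finset.mem_range]
    exact fun i hi => hc.mem hi.le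
  have hC : #C = ℓ := by rw [card_image_of_injOn hc.injOn, card_range]
  have hdeg : ∀ v ∈ s, #(G.nbrsIn C v) ≤ 2 := fun v hv =>
    (card_nbrsIn_image_le c ℓ v).trans (hc.card_filter_adj_le_two h5 hv)
  have hrest := ((hc.triangleFreeOn h5).mono (sdiff_subset (s := s) (t := C))).card_interedges_le
  have hcross : #(G.interedges C (s \ C)) ≤ #(s \ C) * 2 := by
    rw [card_interedges_comm]
    exact card_interedges_le_of_forall fun v hv => hdeg v (sdiff_subset hv)
  have hcycle : #(G.interedges C C) ≤ #C * 2 :=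
    card_interedges_le_of_forall fun v hv => hdeg v (hCs hv)
  have := Nat.sq_sub_div_four_add_le h5 hc.odd (hC ▸ Finset.card_le_card hCs)
  rw [card_interedges_self_eq hCs]
  rw [card_sdiff_of_subset hCs, hC] at hrest hcross
  omega

end IsShortestOddClosedWalk

lemma card_interedges_le_or_exists_triangle {s : Finset V}
    (h : ¬ (G.induce (s : Set V)).Colorable 2) :
    #(G.interedges s s) ≤ 2 * ((#s - 1) ^ 2 / 4 + 1) ∨
      ∃ x ∈ s, ∃ y ∈ s, ∃ z ∈ s, G.Adj x y ∧ G.Adj y z ∧ G.Adj x z := by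
  obtain ⟨c, ℓ, hc⟩ := exists_isShortestOddClosedWalk h
  rcases lt_or_ge ℓ 5 with h5 | h5
  · exact .inr (hc.exists_triangle h5)
  · exact .inl (hc.card_interedges_le h5)

end Counting

section Construction

/-- `K_{a,b}` on the vertices `inl`/`inr`, plus an apex `none` joined to the vertices of index
`< r` on each side. -/
def apexBipartite (a b r : ℕ) : SimpleGraph (Option (Fin a ⊕ Fin b)) where
  Adj x y := match x, y with
    | some u, some v => u.isLeft ≠ v.isLeft
    | none, some v | some v, none => Sum.elim Fin.val Fin.val v < r
    | none, none => False
  symm := ⟨by rintro (_ | x) (_ | y) h <;> simp_all [eq_comm]⟩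
  loopless := ⟨by rintro (_ | x) h <;> simp_all⟩

-- Defined by matching, so that its `if`s agree definitionally with the standard instances.
instance (a b r : ℕ) : DecidableRel (apexBipartite a b r).Adj
  | some u, some v => inferInstanceAs (Decidable (u.isLeft ≠ v.isLeft))
  | none, some v | some v, none => inferInstanceAs (Decidable (Sum.elim Fin.val Fin.val v < r))
  | none, none => inferInstanceAs (Decidable False)

variable {a b r : ℕ}

lemma degree_apexBipartite_none : (apexBipartite a b r).degree none = min a r + min b r := by
  rw [← card_neighborFinset_eq_degree, neighborFinset_eq_filter, card_filter,
    Fintype.sum_option, Fintype.sum_sum_type]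
  simp only [apexBipartite, ne_eq, SimpleGraph.irrefl, ↓reduceIte, Sum.elim_inl, Sum.elim_inr,
    zero_add]
  exact congrArg₂ (· + ·) (Fin.sum_ite_val_lt a r) (Fin.sum_ite_val_lt b r)

lemma degree_apexBipartite_inl (i : Fin a) :
    (apexBipartite a b r).degree (some (.inl i)) = b + if (i : ℕ) < r then 1 else 0 := by
  rw [← card_neighborFinset_eq_degree, neighborFinset_eq_filter, card_filter,
    Fintype.sum_option, Fintype.sum_sum_type]
  simp only [apexBipartite, ne_eq, Sum.elim_inl, Sum.isLeft_inl, not_true_eq_false, ↓reduceIte,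
    sum_const_zero, Sum.isLeft_inr, Bool.true_eq_false, not_false_eq_true, sum_const, card_univ,
    Fintype.card_fin, smul_eq_mul, mul_one, add_comm, add_zero, Nat.add_left_cancel_iff]
  rfl

lemma degree_apexBipartite_inr (j : Fin b) :
    (apexBipartite a b r).degree (some (.inr j)) = a + if (j : ℕ) < r then 1 else 0 := by
  rw [← card_neighborFinset_eq_degree, neighborFinset_eq_filter, card_filter,
    Fintype.sum_option, Fintype.sum_sum_type]
  simp only [apexBipartite, ne_eq, Sum.elim_inr, Sum.isLeft_inr, Sum.isLeft_inl, Bool.false_eq_true,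
    not_false_eq_true, ↓reduceIte, sum_const, card_univ, Fintype.card_fin, smul_eq_mul, mul_one,
    not_true_eq_false, add_comm]
  rfl

lemma card_edgeFinset_apexBipartite :
    #(apexBipartite a b r).edgeFinset = a * b + min a r + min b r := by
  have := sum_degrees_eq_twice_card_edges (apexBipartite a b r)
  rw [Fintype.sum_option, Fintype.sum_sum_type] at this
  simp only [degree_apexBipartite_none, degree_apexBipartite_inl, degree_apexBipartite_inr,
    sum_add_distrib, Fin.sum_ite_val_lt] at this
  simp only [sum_const, card_univ, Fintype.card_fin, smul_eq_mul] at this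
  linarith

lemma not_colorable_apexBipartite (hr : 1 ≤ r) (hra : r ≤ a) (hrb : r ≤ b) :
    ¬ (apexBipartite a b r).Colorable 2 := fun h =>
  h.cliqueFree (by norm_num) {none, some (.inl ⟨0, by omega⟩), some (.inr ⟨0, by omega⟩)}
    (is3Clique_triple_iff.mpr ⟨by simp only [apexBipartite, ne_eq, Sum.elim_inl]; omega,
      by simp only [apexBipartite, ne_eq, Sum.elim_inr]; omega,
      by simp [apexBipartite]⟩)

lemma ncard_common_apexBipartite_none_le (v : Fin a ⊕ Fin b) :
    {w | (apexBipartite a b r).Adj none w ∧ (apexBipartite a b r).Adj (some v) w}.ncard ≤ r := by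
  rcases v with i | j
  · have hsub : {w | (apexBipartite a b r).Adj none w ∧ (apexBipartite a b r).Adj (some (.inl i)) w}
        ⊆ (fun j => some (.inr j)) '' {j : Fin b | (j : ℕ) < r} := by
      rintro (_ | w | w) ⟨h₁, h₂⟩ <;> simp_all [apexBipartite]
    exact (Set.ncard_le_ncard hsub (Set.toFinite _)).trans
      ((Set.ncard_image_le (Set.toFinite _)).trans (Fin.ncard_setOf_val_lt_le b r))
  · have hsub : {w | (apexBipartite a b r).Adj none w ∧ (apexBipartite a b r).Adj (some (.inr j)) w}
        ⊆ (fun i => some (.inl i)) '' {i : Fin a | (i : ℕ) < r} := by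
      rintro (_ | w | w) ⟨h₁, h₂⟩ <;> simp_all [apexBipartite]
    exact (Set.ncard_le_ncard hsub (Set.toFinite _)).trans
      ((Set.ncard_image_le (Set.toFinite _)).trans (Fin.ncard_setOf_val_lt_le a r))

lemma bookFree_apexBipartite (hr : 1 ≤ r) : BookFree r (apexBipartite a b r) := by
  rintro (_ | u) (_ | v) huv
  · exact absurd huv (apexBipartite a b r).irrefl
  · exact ncard_common_apexBipartite_none_le v
  · simp_rw [and_comm (a := (apexBipartite a b r).Adj (some u) _)]
    exact ncard_common_apexBipartite_none_le u
  · have hsub : {w | (apexBipartite a b r).Adj (some u) w ∧ (apexBipartite a b r).Adj (some v) w}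
        ⊆ {none} := by
      rintro (_ | w) ⟨h₁, h₂⟩
      · rfl
      · simp only [apexBipartite, ne_eq] at huv h₁ h₂
        grind
    exact (Set.ncard_le_ncard hsub (Set.toFinite _)).trans ((Set.ncard_singleton _).trans_le hr)

end Construction

end SimpleGraph

namespace BookFree

variable {V : Type*} [DecidableEq V] [Finite V] {G : SimpleGraph V} [DecidableRel G.Adj] {r : ℕ}
  (hG : BookFree r G)
include hG

lemma card_inter_nbrsIn_le {u v : V} (huv : G.Adj u v) (s : Finset V) :
    #(G.nbrsIn s u ∩ G.nbrsIn s v) ≤ r := by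
  have hsub : ((G.nbrsIn s u ∩ G.nbrsIn s v : Finset V) : Set V) ⊆ {w | G.Adj u w ∧ G.Adj v w} :=
    fun w hw => by
      simp only [coe_inter, Set.mem_inter_iff, mem_coe, mem_nbrsIn] at hw
      exact ⟨hw.1.2, hw.2.2⟩
  rw [← Set.ncard_coe_finset]
  exact (Set.ncard_le_ncard hsub (Set.toFinite _)).trans (hG u v huv)

lemma card_inter_nbrsIn_lt {u v w : V} (huv : G.Adj u v) (huw : G.Adj u w) (hvw : G.Adj v w)
    {P : Finset V} (hw : w ∉ P) : #(G.nbrsIn P u ∩ G.nbrsIn P v) < r := by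
  have hsub : insert w (G.nbrsIn P u ∩ G.nbrsIn P v) ⊆
      G.nbrsIn (insert w P) u ∩ G.nbrsIn (insert w P) v := by
    intro t ht
    simp only [Finset.mem_insert, Finset.mem_inter, mem_nbrsIn] at ht ⊢
    rcases ht with rfl | ht
    · exact ⟨⟨.inl rfl, huw⟩, .inl rfl, hvw⟩
    · exact ⟨⟨.inr ht.1.1, ht.1.2⟩, .inr ht.2.1, ht.2.2⟩
  have h₁ := Finset.card_le_card hsub
  rw [card_insert_of_notMem fun h => hw (G.nbrsIn_subset _ _ (mem_inter.mp h).1)] at h₁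
  have h₂ := hG.card_inter_nbrsIn_le huv (insert w P)
  omega

lemma card_nbrsIn_add_card_nbrsIn_lt {u v w : V} (huv : G.Adj u v) (huw : G.Adj u w)
    (hvw : G.Adj v w) {P : Finset V} (hw : w ∉ P) :
    #(G.nbrsIn P u) + #(G.nbrsIn P v) < #P + r := by
  have h₁ := card_union_add_card_inter (G.nbrsIn P u) (G.nbrsIn P v)
  have h₂ := Finset.card_le_card (union_subset (G.nbrsIn_subset P u) (G.nbrsIn_subset P v))
  have h₃ := hG.card_inter_nbrsIn_lt huv huw hvw hw
  omega

lemma card_nbrsIn_triangle_le {x y z : V} (hxy : G.Adj x y) (hyz : G.Adj y z) (hxz : G.Adj x z)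
    (s : Finset V) : #(G.nbrsIn s x) + #(G.nbrsIn s y) + #(G.nbrsIn s z) ≤ #s + 3 * r := by
  have :=
    card_add_card_add_card_le (G.nbrsIn_subset s x) (G.nbrsIn_subset s y) (G.nbrsIn_subset s z)
  have := hG.card_inter_nbrsIn_le hxy s
  have := hG.card_inter_nbrsIn_le hxz s
  have := hG.card_inter_nbrsIn_le hyz s
  omega

lemma card_nbrsIn_triangle_lt {x y z : V} (hxy : G.Adj x y) (hyz : G.Adj y z) (hxz : G.Adj x z)
    {E : Finset V} (hx : x ∉ E) (hy : y ∉ E) (hz : z ∉ E) :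
    #(G.nbrsIn E x) + #(G.nbrsIn E y) + #(G.nbrsIn E z) + 3 ≤ #E + 3 * r := by
  have :=
    card_add_card_add_card_le (G.nbrsIn_subset E x) (G.nbrsIn_subset E y) (G.nbrsIn_subset E z)
  have := hG.card_inter_nbrsIn_lt hxy hxz hyz hz
  have := hG.card_inter_nbrsIn_lt hxz hxy hyz.symm hy
  have := hG.card_inter_nbrsIn_lt hyz hxy.symm hxz.symm hx
  omega

lemma triangleFreeOn_of_forall_lt {s : Finset V} (h : ∀ v ∈ s, #s + 3 * r < 3 * #(G.nbrsIn s v)) :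
    G.TriangleFreeOn s := by
  intro x hx y hy z hz hxy hyz hxz
  have := hG.card_nbrsIn_triangle_le hxy hyz hxz s
  have := h x hx
  have := h y hy
  have := h z hz
  omega

lemma card_interedges_le_sq_div_four_add (s : Finset V) :
    #(G.interedges s s) ≤ 2 * (#s ^ 2 / 4 + (6 * r + 6) ^ 2) := by
  induction s using Finset.strongInduction with
  | H s ih =>
  by_cases hsmall : #s ≤ 6 * r + 6
  · have := card_interedges_le_mul G s s
    have := Nat.mul_le_mul hsmall hsmall
    rw [sq (6 * r + 6)]
    omega
  by_cases hdeg : ∃ v ∈ s, 3 * #(G.nbrsIn s v) ≤ #s + 3 * r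
  · obtain ⟨v, hv, hdv⟩ := hdeg
    have hrec := ih (s.erase v) (erase_ssubset hv)
    rw [card_erase_of_mem hv] at hrec
    have := Nat.sq_div_four_eq_sub_one (m := #s) (by omega)
    rw [card_interedges_self_erase hv]
    omega
  · push Not at hdeg
    have := (hG.triangleFreeOn_of_forall_lt hdeg).card_interedges_le
    omega

lemma card_nbrsIn_mul_card_nbrsIn_le (v : V) (P Q : Finset V) :
    #(G.nbrsIn P v) * #(G.nbrsIn Q v) ≤ #(G.nbrsIn P v) * r + (#P * #Q - #(G.interedges P Q)) := by
  have hpoint : ∀ p ∈ G.nbrsIn P v, #(G.nbrsIn Q v) ≤ r + (#Q - #(G.nbrsIn Q p)) := by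
    intro p hp
    have hsub : G.nbrsIn Q v ⊆ (G.nbrsIn Q v ∩ G.nbrsIn Q p) ∪ (Q \ G.nbrsIn Q p) := by
      intro t ht
      by_cases htp : t ∈ G.nbrsIn Q p
      · exact mem_union_left _ (mem_inter.mpr ⟨ht, htp⟩)
      · exact mem_union_right _ (Finset.mem_sdiff.mpr ⟨G.nbrsIn_subset Q v ht, htp⟩)
    have h₁ := (Finset.card_le_card hsub).trans (card_union_le _ _)
    have h₂ := hG.card_inter_nbrsIn_le (mem_nbrsIn.mp hp).2 Q
    rw [card_sdiff_of_subset (G.nbrsIn_subset Q p)] at h₁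
    omega
  have hsum := sum_le_sum hpoint
  rw [sum_const, smul_eq_mul, sum_add_distrib, sum_const, smul_eq_mul] at hsum
  have hmono : ∑ p ∈ G.nbrsIn P v, (#Q - #(G.nbrsIn Q p)) ≤ ∑ p ∈ P, (#Q - #(G.nbrsIn Q p)) :=
    sum_le_sum_of_subset (G.nbrsIn_subset P v)
  have htotal : #(G.interedges P Q) + ∑ p ∈ P, (#Q - #(G.nbrsIn Q p)) = #P * #Q := by
    rw [card_interedges_eq_sum, ← sum_add_distrib, ← smul_eq_mul, ← sum_const]
    exact sum_congr rfl fun p _ => Nat.add_sub_of_le (Finset.card_le_card (G.nbrsIn_subset Q p))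
  omega

lemma card_nbrsIn_le_or_eq_zero (v : V) (P Q : Finset V) :
    (#(G.nbrsIn P v) ≤ r + (#P * #Q - #(G.interedges P Q)) ∧
      #(G.nbrsIn Q v) ≤ r + (#P * #Q - #(G.interedges P Q))) ∨
      #(G.nbrsIn P v) = 0 ∨ #(G.nbrsIn Q v) = 0 := by
  have h₁ := hG.card_nbrsIn_mul_card_nbrsIn_le v P Q
  have h₂ := hG.card_nbrsIn_mul_card_nbrsIn_le v Q P
  rw [card_interedges_comm Q P, mul_comm #Q #P, mul_comm (#(G.nbrsIn Q v))] at h₂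
  by_cases hP : #(G.nbrsIn P v) ≤ r + (#P * #Q - #(G.interedges P Q))
  · by_cases hQ : #(G.nbrsIn Q v) ≤ r + (#P * #Q - #(G.interedges P Q))
    · exact .inl ⟨hP, hQ⟩
    · exact .inr (.inl (Nat.eq_zero_of_mul_le_mul_add h₁ (by omega)))
  · exact .inr (.inr (Nat.eq_zero_of_mul_le_mul_add (by rwa [mul_comm] at h₂) (by omega)))


lemma card_interedges_add_card_nbrsIn_le_of_triangle {x y z : V} (hxy : G.Adj x y) (hyz : G.Adj y z)
    (hxz : G.Adj x z) {P Q : Finset V} (hxP : x ∉ P) (hyP : y ∉ P) (hzP : z ∉ P) (hxQ : x ∉ Q)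
    (hyQ : y ∉ Q) (hzQ : z ∉ Q) (hdense : (#P + #Q) ^ 2 / 4 + 2 ≤ #(G.interedges P Q) + r)
    (hbig : 20 * r + 20 ≤ #P + #Q) :
    #(G.interedges P Q) + (#(G.nbrsIn P x) + #(G.nbrsIn Q x) + #(G.nbrsIn P y)
      + #(G.nbrsIn Q y) + #(G.nbrsIn P z) + #(G.nbrsIn Q z)) + 3 ≤ (#P + 1) * (#Q + 1) + 2 * r := by
  have hPQ := card_interedges_le_mul G P Q
  have hprod := Nat.mul_le_add_sq_div_four #P #Q
  have hbal₁ := Nat.lt_add_of_sq_div_four_add_le (a := #P) (b := #Q) (r := r)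
    (μ := #P * #Q - #(G.interedges P Q)) (by omega)
  have hbal₂ := Nat.lt_add_of_sq_div_four_add_le (a := #Q) (b := #P) (r := r)
    (μ := #P * #Q - #(G.interedges P Q)) (by rw [add_comm #Q, mul_comm #Q]; omega)
  have hx := hG.card_nbrsIn_le_or_eq_zero x P Q
  have hy := hG.card_nbrsIn_le_or_eq_zero y P Q
  have hz := hG.card_nbrsIn_le_or_eq_zero z P Q
  have := hG.card_nbrsIn_add_card_nbrsIn_lt hxy hxz hyz hzP
  have := hG.card_nbrsIn_add_card_nbrsIn_lt hxz hxy hyz.symm hyP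
  have := hG.card_nbrsIn_add_card_nbrsIn_lt hyz hxy.symm hxz.symm hxP
  have := hG.card_nbrsIn_add_card_nbrsIn_lt hxy hxz hyz hzQ
  have := hG.card_nbrsIn_add_card_nbrsIn_lt hxz hxy hyz.symm hyQ
  have := hG.card_nbrsIn_add_card_nbrsIn_lt hyz hxy.symm hxz.symm hxQ
  have := Finset.card_le_card (G.nbrsIn_subset P x)
  have := Finset.card_le_card (G.nbrsIn_subset P y)
  have := Finset.card_le_card (G.nbrsIn_subset P z)
  have := Finset.card_le_card (G.nbrsIn_subset Q x)
  have := Finset.card_le_card (G.nbrsIn_subset Q y)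
  have := Finset.card_le_card (G.nbrsIn_subset Q z)
  have hexp : (#P + 1) * (#Q + 1) = #P * #Q + #P + #Q + 1 := by ring
  -- `μ = |P||Q| - e(P, Q)` cross pairs are missing. Each of `x, y, z` has at most `r + μ`
  -- neighbours on each side or none on one side, and in all 27 cases the pair bounds suffice.
  rcases hx with hx | hx | hx <;> rcases hy with hy | hy | hy <;> rcases hz with hz | hz | hz <;>
    omega

lemma colorable_induce_of_dense {s : Finset V} (hN : 2 * (6 * r + 6) ^ 2 + 20 * r + 20 ≤ #s)
    (hdense : 2 * (#s ^ 2 / 4) + 3 ≤ #(G.interedges s s) + 2 * r) :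
    (G.induce (s : Set V)).Colorable 2 := by
  by_contra h
  have hsq₁ := Nat.sq_div_four_eq_sub_one (m := #s) (by omega)
  rcases card_interedges_le_or_exists_triangle h with hle | ⟨x, hx, y, hy, z, hz, hxy, hyz, hxz⟩
  · omega
  have hsq₂ := Nat.sq_div_four_eq_sub_two (m := #s - 1) (by omega)
  have hsplit := card_interedges_le_of_triangle hx hy hz hxy hyz hxz
  have hattach := hG.card_nbrsIn_triangle_lt hxy hyz hxz (E := s \ {x, y, z})
    (by simp) (by simp) (by simp)
  have hrest := hG.card_interedges_le_sq_div_four_add (s \ {x, y, z})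
  rw [card_sdiff_triangle hx hy hz hxy hyz hxz] at hattach hrest
  rw [show #s - 1 - 2 = #s - 3 by omega, show #s - 1 - 1 = #s - 2 by omega] at hsq₂
  omega

lemma card_interedges_add_card_nbrsIn_le_of_bipartition {x y z : V} (hxy : G.Adj x y)
    (hyz : G.Adj y z) (hxz : G.Adj x z) {E P : Finset V} (hxE : x ∉ E) (hyE : y ∉ E)
    (hzE : z ∉ E) (hPE : P ⊆ E) (hP : ∀ u ∈ P, ∀ v ∈ P, ¬ G.Adj u v)
    (hQ : ∀ u ∈ E \ P, ∀ v ∈ E \ P, ¬ G.Adj u v)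
    (hdense : 2 * (#E ^ 2 / 4) + 3 ≤ #(G.interedges E E) + 2 * r) (hbig : 20 * r + 20 ≤ #E) :
    #(G.interedges E E) + 2 * (#(G.nbrsIn E x) + #(G.nbrsIn E y) + #(G.nbrsIn E z)) + 6 ≤
      2 * ((#E + 2) ^ 2 / 4 + 2 * r) := by
  have hEPQ : #(G.interedges E E) = 2 * #(G.interedges P (E \ P)) := by
    rw [card_interedges_self_eq hPE, card_interedges_eq_zero hQ, card_interedges_eq_zero hP]
    omega
  have hunion : E = P ∪ (E \ P) := (union_sdiff_of_subset hPE).symm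
  have hdeg : ∀ v, #(G.nbrsIn E v) = #(G.nbrsIn P v) + #(G.nbrsIn (E \ P) v) := fun v => by
    conv_lhs => rw [hunion]
    exact card_nbrsIn_union disjoint_sdiff v
  have hcard : #P + #(E \ P) = #E := by
    rw [hunion, card_union_of_disjoint disjoint_sdiff, ← hunion]
  have hend := hG.card_interedges_add_card_nbrsIn_le_of_triangle hxy hyz hxz (P := P) (Q := E \ P)
    (fun h => hxE (hPE h)) (fun h => hyE (hPE h)) (fun h => hzE (hPE h))
    (fun h => hxE (sdiff_subset h)) (fun h => hyE (sdiff_subset h))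
    (fun h => hzE (sdiff_subset h)) (by rw [hcard]; omega) (by omega)
  have hprod := Nat.mul_le_add_sq_div_four (#P + 1) (#(E \ P) + 1)
  rw [show #P + 1 + (#(E \ P) + 1) = #E + 2 by omega] at hprod
  rw [hdeg, hdeg, hdeg]
  omega

lemma card_interedges_le_of_not_colorable (hr : 1 ≤ r) {s : Finset V}
    (hN : 2 * (6 * r + 6) ^ 2 + 20 * r + 60 ≤ #s) (h : ¬ (G.induce (s : Set V)).Colorable 2) :
    #(G.interedges s s) ≤ 2 * ((#s - 1) ^ 2 / 4 + 2 * r) := by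
  rcases card_interedges_le_or_exists_triangle h with hle | ⟨x, hx, y, hy, z, hz, hxy, hyz, hxz⟩
  · omega
  set E := s \ {x, y, z} with hEdef
  have hE : #E = #s - 3 := card_sdiff_triangle hx hy hz hxy hyz hxz
  have hxE : x ∉ E := by simp [E]
  have hyE : y ∉ E := by simp [E]
  have hzE : z ∉ E := by simp [E]
  have hsplit := card_interedges_le_of_triangle hx hy hz hxy hyz hxz
  rw [← hEdef] at hsplit
  have hattach := hG.card_nbrsIn_triangle_lt hxy hyz hxz hxE hyE hzE
  have hsq := Nat.sq_div_four_eq_sub_two (m := #s - 1) (by omega)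
  rw [show #s - 1 - 2 = #s - 3 by omega, show #s - 1 - 1 = #s - 2 by omega] at hsq
  by_contra! hcon
  have hdense : 2 * (#E ^ 2 / 4) + 3 ≤ #(G.interedges E E) + 2 * r := by
    rw [hE]
    omega
  obtain ⟨P, hPE, hP, hQ⟩ :=
    exists_bipartition_of_colorable (hG.colorable_induce_of_dense (by omega) hdense)
  have := hG.card_interedges_add_card_nbrsIn_le_of_bipartition hxy hyz hxz hxE hyE hzE hPE hP hQ
    hdense (by omega)
  rw [hE, show #s - 3 + 2 = #s - 1 by omega] at this
  omega

lemma ncard_edgeSet_le [Fintype V] (hr : 1 ≤ r)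
    (hN : 2 * (6 * r + 6) ^ 2 + 20 * r + 60 ≤ Fintype.card V) (h : ¬ G.Colorable 2) :
    G.edgeSet.ncard ≤ (Fintype.card V - 1) ^ 2 / 4 + 2 * r := by
  have hind : ¬ (G.induce ((univ : Finset V) : Set V)).Colorable 2 := fun hc =>
    h (hc.of_hom ⟨fun v => ⟨v, by simp⟩, fun huv => huv⟩)
  have := hG.card_interedges_le_of_not_colorable hr (by simpa using hN) hind
  rw [card_interedges_univ, card_univ] at this
  rw [← coe_edgeFinset, Set.ncard_coe_finset]
  omega

end BookFree

lemma BookFree.of_iso {V W : Type*} {G : SimpleGraph V} {H : SimpleGraph W} {r : ℕ}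
    (φ : G ≃g H) (hG : BookFree r G) : BookFree r H := by
  intro u v huv
  have : {w | H.Adj u w ∧ H.Adj v w} = φ '' {w | G.Adj (φ.symm u) w ∧ G.Adj (φ.symm v) w} := by
    ext w
    refine ⟨fun h => ⟨φ.symm w, ?_, by simp⟩, ?_⟩
    · simpa [← φ.symm.map_adj_iff] using h
    · rintro ⟨x, hx, rfl⟩
      simpa [← φ.symm.map_adj_iff] using hx
  rw [this, Set.ncard_image_of_injective _ φ.injective]
  exact hG _ _ (φ.symm.map_adj_iff.mpr huv)

lemma exists_not_colorable_bookFree_ncard_edgeSet_eq {n r : ℕ} (hr : 1 ≤ r) (hn : 2 * r + 1 ≤ n) :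
    ∃ G : SimpleGraph (Fin n), ¬ G.Colorable 2 ∧ BookFree r G ∧
      G.edgeSet.ncard = (n - 1) ^ 2 / 4 + 2 * r := by
  set b := (n - 1) / 2
  set a := n - 1 - b
  let e : Option (Fin a ⊕ Fin b) ≃ Fin n := Fintype.equivFinOfCardEq (by simp; omega)
  let φ := Iso.map e (apexBipartite a b r)
  refine ⟨_, fun h => not_colorable_apexBipartite hr (by omega) (by omega) (h.of_hom φ.toHom),
    (bookFree_apexBipartite hr).of_iso φ, ?_⟩
  rw [← Nat.card_coe_set_eq, ← Nat.card_congr φ.mapEdgeSet, Nat.card_coe_set_eq,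
    ← coe_edgeFinset, Set.ncard_coe_finset, card_edgeFinset_apexBipartite,
    Nat.sub_div_two_mul_div_two]
  omega

/-- For every integer `r ≥ 1` and all sufficiently large `n`, the maximum number of edges of a
non-bipartite `B_{r+1}`-free simple graph on `n` vertices equals `⌊(n-1)²/4⌋ + 2r`. -/
theorem stmt_0 (r : ℕ) (hr : 1 ≤ r) :
    ∃ n₀ : ℕ, ∀ n : ℕ, n₀ ≤ n →
      IsGreatest {m : ℕ | ∃ G : SimpleGraph (Fin n),
          ¬ G.Colorable 2 ∧ BookFree r G ∧ G.edgeSet.ncard = m}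
        ((n - 1) ^ 2 / 4 + 2 * r) := by
  refine ⟨2 * (6 * r + 6) ^ 2 + 20 * r + 60, fun n hn => ⟨?_, ?_⟩⟩
  · exact exists_not_colorable_bookFree_ncard_edgeSet_eq hr (by nlinarith)
  · rintro m ⟨G, hcol, hG, rfl⟩
    classical
    simpa using hG.ncard_edgeSet_le hr (by simpa using hn) hcol
end

section
/- Let r ≥ 1 be an integer. For all sufficiently large n, every non-bipartite B_{r+1}-free simple graph G on n vertices satisfies e(G) ≤ ⌊(n−1)²/4⌋ + 2r. -/
open SimpleGraph Set

/-
Induction on `n` proves `4 e(G) ≤ (n - 1)^2 + 8r + 4r(144r - n)`; the last term vanishes for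
`n ≥ 144r` and pays for the trivial bound `e(G) ≤ n(n - 1)/2` when `n < 16r`.

If `G` is triangle-free, a shortest odd closed walk `C` is a cycle of length at least `5`, and no
vertex has three neighbours on `C`: they would cut `C` into three arcs, one of odd length, and
closing that arc through the vertex would give a shorter odd closed walk unless the other two arcs
are single edges, which would make a triangle. Mantel's theorem outside `C` then gives
`4 e(G) ≤ (n - 1)^2 + 8`.

Otherwise remove a triangle `T`. Two vertices of `T` have at most `r - 1` common neighbours
outside `T`, so `T` sends at most `n + 3r - 6` edges to `R = V ∖ T`, and induction applies if
`G[R]` is not bipartite. If `G[R]` is bipartite with parts `A`, `B` and `m` non-edges between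
them, either `|A|` and `|B|` differ by more than `2r`, so that `|A||B| ≤ (n - 3)^2/4 - r - 1`, or
a vertex of `T` with neighbours on both sides has at most `r + m` on each (a neighbour in `B`
misses at most `m` vertices of `A` and shares at most `r` with it), and then `T` sends at most
`n - 5 + 2r + m` edges to `R`.
-/

open Finset

lemma Finset.card_add_card_add_card_le_s1 {α : Type*} [DecidableEq α] (s t u : Finset α) :
    #s + #t + #u ≤ #(s ∪ t ∪ u) + #(s ∩ t) + #(s ∩ u) + #(t ∩ u) := by
  have hst := card_union_add_card_inter s t
  have hstu := card_union_add_card_inter (s ∪ t) u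
  have hle := card_union_le (s ∩ u) (t ∩ u)
  rw [union_inter_distrib_right] at hstu
  omega

lemma four_mul_mul_add_le_sq {a b r : ℕ} (hr : 1 ≤ r) (h : a + b + 2 * r < 2 * a) :
    4 * (a * b) + 4 * r + 4 ≤ (a + b) ^ 2 := by
  nlinarith

namespace SimpleGraph

variable {V : Type*} {G : SimpleGraph V}

section Counting

variable [DecidableRel G.Adj]

variable (G) in
def degOn (X : Finset V) (v : V) : ℕ := #{w ∈ X | G.Adj v w}

lemma degOn_le_card (X : Finset V) (v : V) : G.degOn X v ≤ #X :=
  card_filter_le _ _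

lemma degOn_le_card_sub_one [DecidableEq V] {X : Finset V} {v : V} (hv : v ∈ X) :
    G.degOn X v ≤ #X - 1 := by
  rw [← card_erase_of_mem hv]
  exact card_le_card fun w hw ↦ by
    rw [mem_filter] at hw
    exact mem_erase.2 ⟨(G.ne_of_adj hw.2).symm, hw.1⟩

lemma degOn_union [DecidableEq V] {X Y : Finset V} (h : Disjoint X Y) (v : V) :
    G.degOn (X ∪ Y) v = G.degOn X v + G.degOn Y v := by
  rw [degOn, filter_union, card_union_of_disjoint (disjoint_filter_filter h)]; rfl

lemma degOn_eq_zero_of_forall_not_adj {X : Finset V} {v : V} (h : ∀ w ∈ X, ¬G.Adj v w) :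
    G.degOn X v = 0 :=
  card_eq_zero.2 (filter_eq_empty_iff.2 h)

lemma sum_degOn_comm (X Y : Finset V) : ∑ v ∈ X, G.degOn Y v = ∑ v ∈ Y, G.degOn X v := by
  simp only [degOn, card_filter]
  rw [sum_comm]
  simp only [G.adj_comm]

lemma degOn_add_degOn_le [DecidableEq V] (U : Finset V) (s t : V) :
    G.degOn U s + G.degOn U t ≤ #U + #{w ∈ U | G.Adj s w ∧ G.Adj t w} := by
  rw [degOn, degOn, ← card_union_add_card_inter, ← filter_and]
  gcongr
  exact union_subset (filter_subset _ _) (filter_subset _ _)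

lemma card_le_degOn_add_card_mul_card_sub_sum {A B : Finset V} {w : V} (hw : w ∈ B) :
    #A ≤ G.degOn A w + (#A * #B - ∑ u ∈ B, G.degOn A u) := by
  have h := single_le_sum (f := fun u ↦ #A - G.degOn A u) (fun _ _ ↦ Nat.zero_le _) hw
  rw [sum_tsub_distrib _ fun u _ ↦ degOn_le_card A u, sum_const, smul_eq_mul, mul_comm] at h
  have := G.degOn_le_card A w
  omega

lemma sum_degOn_union_eq_two_mul [DecidableEq V] {A B : Finset V} (hAB : Disjoint A B)
    (hA : ∀ v ∈ A, G.degOn A v = 0) (hB : ∀ v ∈ B, G.degOn B v = 0) :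
    ∑ v ∈ A ∪ B, G.degOn (A ∪ B) v = 2 * ∑ v ∈ B, G.degOn A v := by
  simp only [degOn_union hAB, sum_union hAB, sum_add_distrib, sum_congr rfl hA, sum_congr rfl hB,
    sum_const_zero, sum_degOn_comm A B]
  ring

lemma two_mul_card_edgeFinset_induce [DecidableEq V] (R : Finset V) :
    2 * #(G.induce (R : Set V)).edgeFinset = ∑ v ∈ R, G.degOn R v := by
  rw [← sum_degrees_eq_twice_card_edges, ← sum_coe_sort R]
  refine sum_congr rfl fun v _ ↦ ?_
  rw [← card_neighborFinset_eq_degree, degOn, neighborFinset_eq_filter,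
    ← card_map (Function.Embedding.subtype _)]
  congr 1
  ext w
  simp [and_comm]

lemma exists_parts_of_colorable_induce [DecidableEq V] {R : Finset V}
    (h : (G.induce (R : Set V)).Colorable 2) :
    ∃ A B : Finset V, Disjoint A B ∧ A ∪ B = R ∧ (∀ v ∈ A, G.degOn A v = 0) ∧
      ∀ v ∈ B, G.degOn B v = 0 := by
  obtain ⟨C⟩ := h
  let f : V → Fin 2 := fun v ↦ if hv : v ∈ R then C ⟨v, hv⟩ else 0
  have hf {u v : V} (hu : u ∈ R) (hv : v ∈ R) (huv : G.Adj u v) : f u ≠ f v := by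
    simpa only [f, dif_pos hu, dif_pos hv] using C.valid (v := ⟨u, hu⟩) (w := ⟨v, hv⟩) huv
  refine ⟨{v ∈ R | f v = 0}, {v ∈ R | f v ≠ 0}, disjoint_filter_filter_not _ _ _,
    filter_union_filter_not_eq _ _,
    fun u hu ↦ degOn_eq_zero_of_forall_not_adj fun v hv huv ↦ ?_,
    fun u hu ↦ degOn_eq_zero_of_forall_not_adj fun v hv huv ↦ ?_⟩
  · rw [mem_filter] at hu hv
    exact hf hu.1 hv.1 huv (hu.2.trans hv.2.symm)
  · rw [mem_filter] at hu hv
    exact hf hu.1 hv.1 huv (by omega)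

variable [Fintype V]

lemma degree_eq_degOn_univ (v : V) : G.degree v = G.degOn univ v := by
  rw [← card_neighborFinset_eq_degree, neighborFinset_eq_filter]; rfl

lemma two_mul_card_edgeFinset_eq [DecidableEq V] (S : Finset V) :
    2 * #G.edgeFinset = ∑ v ∈ S, G.degOn S v + 2 * ∑ v ∈ Sᶜ, G.degOn S v +
      ∑ v ∈ Sᶜ, G.degOn Sᶜ v := by
  have hdeg (v : V) : G.degree v = G.degOn S v + G.degOn Sᶜ v := by
    rw [degree_eq_degOn_univ, ← degOn_union disjoint_compl_right, union_compl]
  rw [← sum_degrees_eq_twice_card_edges, ← sum_add_sum_compl S,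
    sum_congr rfl fun v _ ↦ hdeg v, sum_congr rfl fun v _ ↦ hdeg v, sum_add_distrib,
    sum_add_distrib, sum_degOn_comm Sᶜ S]
  ring

lemma four_mul_card_edgeFinset_le_two_mul :
    4 * #G.edgeFinset ≤ 2 * (Fintype.card V * (Fintype.card V - 1)) := by
  have h := G.card_edgeFinset_le_card_choose_two
  rw [Nat.choose_two_right] at h
  have := Nat.div_mul_le_self (Fintype.card V * (Fintype.card V - 1)) 2
  omega

lemma CliqueFree.four_mul_card_edgeFinset_le (h : G.CliqueFree 3) :
    4 * #G.edgeFinset ≤ Fintype.card V ^ 2 := by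
  have hT := h.card_edgeFinset_le (r := 2)
  have h2 : (Fintype.card V % 2).choose 2 = 0 := Nat.choose_eq_zero_of_lt (Nat.mod_lt _ two_pos)
  simp only [h2] at hT
  omega

lemma two_mul_card_edgeFinset_le_of_triangle [DecidableEq V] {x y z : V} (hxy : G.Adj x y)
    (hyz : G.Adj y z) (hzx : G.Adj z x) :
    2 * #G.edgeFinset ≤ 6 + 2 * (G.degOn {x, y, z}ᶜ x + G.degOn {x, y, z}ᶜ y +
      G.degOn {x, y, z}ᶜ z) + ∑ v ∈ ({x, y, z} : Finset V)ᶜ, G.degOn {x, y, z}ᶜ v := by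
  have h := G.two_mul_card_edgeFinset_eq {x, y, z}
  have hT : ∑ v ∈ {x, y, z}, G.degOn {x, y, z} v ≤ 6 := by
    have h3 : #({x, y, z} : Finset V) ≤ 3 := card_le_three
    have := sum_le_card_nsmul {x, y, z} (fun v ↦ G.degOn {x, y, z} v) 2 fun v hv ↦
      (degOn_le_card_sub_one hv).trans (by omega)
    rw [smul_eq_mul] at this
    omega
  have hD : ∑ v ∈ ({x, y, z} : Finset V)ᶜ, G.degOn {x, y, z} v =
      G.degOn {x, y, z}ᶜ x + G.degOn {x, y, z}ᶜ y + G.degOn {x, y, z}ᶜ z := by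
    rw [sum_degOn_comm, sum_insert (by simp [hxy.ne, hzx.ne.symm]), sum_insert (by simp [hyz.ne]),
      sum_singleton, add_assoc]
  omega

lemma four_mul_card_edgeFinset_le_of_degOn_le_two [DecidableEq V] (hG : G.CliqueFree 3)
    {S : Finset V} (hS : 5 ≤ #S) (h2 : ∀ v, G.degOn S v ≤ 2) :
    4 * #G.edgeFinset ≤ (Fintype.card V - 1) ^ 2 + 8 := by
  have hsplit := G.two_mul_card_edgeFinset_eq S
  have hin : ∑ v ∈ S, G.degOn S v ≤ 2 * #S := by
    simpa [mul_comm] using sum_le_card_nsmul S _ _ fun v _ ↦ h2 v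
  have hcross : ∑ v ∈ Sᶜ, G.degOn S v ≤ 2 * #Sᶜ := by
    simpa [mul_comm] using sum_le_card_nsmul Sᶜ _ _ fun v _ ↦ h2 v
  have hout : 2 * ∑ v ∈ Sᶜ, G.degOn Sᶜ v ≤ #Sᶜ ^ 2 := by
    have := (hG.comap (Embedding.induce (Sᶜ : Finset V)).isContained)
      |>.four_mul_card_edgeFinset_le
    rw [show Fintype.card ((Sᶜ : Finset V) : Set V) = #Sᶜ from Fintype.card_coe _] at this
    rw [← two_mul_card_edgeFinset_induce]
    omega
  rw [card_compl] at hcross hout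
  obtain ⟨m, hm⟩ : ∃ m, Fintype.card V = #S + m :=
    ⟨_, (Nat.add_sub_cancel' (card_le_univ S)).symm⟩
  obtain ⟨s, hs⟩ : ∃ s, #S = s + 5 := ⟨#S - 5, by omega⟩
  rw [hm, Nat.add_sub_cancel_left] at hcross hout
  rw [hm, hs, show s + 5 + m - 1 = s + m + 4 by omega]
  rw [hs] at hin
  nlinarith

end Counting

lemma CliqueFree.false_of_triangle (hG : G.CliqueFree 3) {x y z : V} (hxy : G.Adj x y)
    (hyz : G.Adj y z) (hxz : G.Adj x z) : False := by
  classical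
  exact hG {x, y, z} (is3Clique_triple_iff.2 ⟨hxy, hxz, hyz⟩)

lemma exists_shortest_odd_loop (hG : ¬G.Colorable 2) :
    ∃ (u : V) (w : G.Walk u u), Odd w.length ∧
      ∀ (v : V) (p : G.Walk v v), Odd p.length → w.length ≤ p.length := by
  classical
  have hex : ∃ n, ∃ (u : V) (w : G.Walk u u), Odd w.length ∧ w.length = n := by
    simp_rw [two_colorable_iff_forall_loop_even, not_forall, ← Nat.not_odd_iff_even,
      not_not] at hG
    obtain ⟨u, w, hw⟩ := hG
    exact ⟨_, u, w, hw, rfl⟩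
  obtain ⟨u, w, hw, hlen⟩ := Nat.find_spec hex
  exact ⟨u, w, hw, fun v p hp ↦ hlen ▸ Nat.find_min' hex ⟨v, p, hp, rfl⟩⟩

namespace Walk

variable {u : V}

lemma five_le_length_of_cliqueFree (hG : G.CliqueFree 3) (w : G.Walk u u)
    (hodd : Odd w.length) : 5 ≤ w.length := by
  have h1 : w.length ≠ 1 := fun h ↦ G.irrefl (adj_of_length_eq_one h)
  have h3 : w.length ≠ 3 := fun h ↦ by
    have h01 := w.adj_getVert_succ (i := 0) (by omega)
    have h12 := w.adj_getVert_succ (i := 1) (by omega)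
    have h23 := w.adj_getVert_succ (i := 2) (by omega)
    rw [getVert_zero] at h01
    rw [show 2 + 1 = w.length by omega, getVert_length] at h23
    exact hG.false_of_triangle h01 h12 h23.symm
  obtain ⟨k, hk⟩ := hodd
  omega

variable [DecidableEq V]

lemma exists_three_arcs (w : G.Walk u u) {x y z : V} (hx : x ∈ w.support) (hy : y ∈ w.support)
    (hz : z ∈ w.support) :
    ∃ (A : G.Walk x y) (B : G.Walk y z) (C : G.Walk z x),
      A.length + B.length + C.length = w.length := by
  set w' := w.rotate x hx
  have hy' : y ∈ w'.support := (mem_support_rotate_iff ..).2 hy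
  have hz' : z ∈ w'.support := (mem_support_rotate_iff ..).2 hz
  have hlen := congrArg length (w'.take_spec hy')
  rw [length_append, length_rotate] at hlen
  rw [← w'.take_spec hy', mem_support_append_iff] at hz'
  rcases hz' with hz' | hz'
  · have h := congrArg length ((w'.takeUntil y hy').take_spec hz')
    rw [length_append] at h
    exact ⟨(w'.dropUntil y hy').reverse, ((w'.takeUntil y hy').dropUntil z hz').reverse,
      ((w'.takeUntil y hy').takeUntil z hz').reverse, by simp only [length_reverse]; omega⟩
  · have h := congrArg length ((w'.dropUntil y hy').take_spec hz')
    rw [length_append] at h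
    exact ⟨w'.takeUntil y hy', (w'.dropUntil y hy').takeUntil z hz',
      (w'.dropUntil y hy').dropUntil z hz', by omega⟩

section ShortestOddLoop

variable {w : G.Walk u u} (hodd : Odd w.length)
  (hmin : ∀ (v : V) (p : G.Walk v v), Odd p.length → w.length ≤ p.length)
include hodd hmin

lemma card_support_toFinset_of_shortest_odd : #w.support.toFinset = w.length := by
  cases w with
  | nil => simp at hodd
  | @cons _ v _ h t =>
    -- A nontrivial closed subwalk of `t` would split `w` into two shorter closed walks, one odd.
    have ht : t.IsPath := by
      refine isPath_iff_isSubwalk_imp_nil.2 fun x s ⟨ru, rv, hs⟩ ↦ ?_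
      by_contra hne
      have hs1 := not_nil_iff_lt_length.1 hne
      have hlen : (cons h t).length = s.length + (cons h (ru.append rv)).length := by
        rw [hs]; simp only [length_cons, length_append]; ring
      have hL : 0 < (cons h (ru.append rv)).length := Nat.succ_pos _
      rw [hlen, Nat.odd_iff] at hodd
      by_cases hs : s.length % 2 = 1
      · have := hmin x s (Nat.odd_iff.2 hs)
        omega
      · have := hmin u (cons h (ru.append rv)) (Nat.odd_iff.2 (by omega))
        omega
    rw [support_cons, List.toFinset_cons,
      Finset.insert_eq_of_mem (List.mem_toFinset.2 t.end_mem_support),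
      List.toFinset_card_of_nodup ht.support_nodup, length_support, length_cons]

lemma degOn_support_le_two_of_shortest_odd [DecidableRel G.Adj] (hG : G.CliqueFree 3) (v : V) :
    G.degOn w.support.toFinset v ≤ 2 := by
  by_contra! h
  obtain ⟨x, hx, y, hy, z, hz, hxy, hxz, hyz⟩ := two_lt_card.1 h
  simp only [mem_filter, List.mem_toFinset] at hx hy hz
  obtain ⟨A, B, C, hABC⟩ := w.exists_three_arcs hx.1 hy.1 hz.1
  -- Closing the odd arc through `v` gives an odd closed walk, so the other two arcs are edges.
  have key {a b d : V} (P : G.Walk a b) (Q : G.Walk b d) (R : G.Walk d a) (hva : G.Adj v a)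
      (hvb : G.Adj v b) (hvd : G.Adj v d) (hsum : P.length + Q.length + R.length = w.length)
      (hP : Odd P.length) (hbd : b ≠ d) (hda : d ≠ a) : False := by
    have hloop := hmin v (cons hva (P.concat hvb.symm))
      (by rw [length_cons, length_concat]; exact hP.add_even even_two)
    have hQ := not_nil_iff_lt_length.1 (not_nil_of_ne (p := Q) hbd)
    have hR := not_nil_iff_lt_length.1 (not_nil_of_ne (p := R) hda)
    simp only [length_cons, length_concat] at hloop
    exact hG.false_of_triangle hvb (adj_of_length_eq_one (p := Q) (by omega)) hvd
  obtain ⟨k, hk⟩ := hodd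
  rcases Nat.even_or_odd A.length with ⟨a, ha⟩ | hA
  · rcases Nat.even_or_odd B.length with ⟨b, hb⟩ | hB
    · exact key C A B hz.2 hx.2 hy.2 (by omega) ⟨k - a - b, by omega⟩ hxy hyz
    · exact key B C A hy.2 hz.2 hx.2 (by omega) hB hxz.symm hxy
  · exact key A B C hx.2 hy.2 hz.2 hABC hA hyz hxz.symm

end ShortestOddLoop

end Walk

lemma CliqueFree.four_mul_card_edgeFinset_le_of_not_colorable [Fintype V] [DecidableEq V]
    [DecidableRel G.Adj] (hK3 : G.CliqueFree 3) (hG : ¬G.Colorable 2) :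
    4 * #G.edgeFinset ≤ (Fintype.card V - 1) ^ 2 + 8 := by
  obtain ⟨u, w, hodd, hmin⟩ := exists_shortest_odd_loop hG
  refine four_mul_card_edgeFinset_le_of_degOn_le_two hK3 ?_
    (Walk.degOn_support_le_two_of_shortest_odd hodd hmin hK3)
  rw [Walk.card_support_toFinset_of_shortest_odd hodd hmin]
  exact w.five_le_length_of_cliqueFree hK3 hodd

end SimpleGraph

namespace BookFree

variable {r : ℕ}

section

variable {V : Type*} {G : SimpleGraph V} [Fintype V]

lemma induce (hBF : BookFree r G) (R : Set V) : BookFree r (G.induce R) := by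
  intro u v huv
  rw [← Set.ncard_image_of_injective _ Subtype.val_injective]
  refine (Set.ncard_le_ncard ?_ (Set.toFinite _)).trans (hBF u v huv)
  rintro _ ⟨w, hw, rfl⟩
  exact hw

variable [DecidableRel G.Adj] {s t x y z : V} {U : Finset V}

lemma card_filter_adj_adj_le (hBF : BookFree r G) (hst : G.Adj s t) (U : Finset V) :
    #{w ∈ U | G.Adj s w ∧ G.Adj t w} ≤ r := by
  refine le_trans ?_ (hBF s t hst)
  rw [← Set.ncard_coe_finset]
  exact Set.ncard_le_ncard (fun w hw ↦ (mem_filter.1 hw).2)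

variable [DecidableEq V]

lemma card_filter_adj_adj_lt (hBF : BookFree r G) (hst : G.Adj s t) (hsx : G.Adj s x)
    (htx : G.Adj t x) (hx : x ∉ U) : #{w ∈ U | G.Adj s w ∧ G.Adj t w} < r := by
  have h := hBF.card_filter_adj_adj_le hst (insert x U)
  rw [filter_insert, if_pos ⟨hsx, htx⟩,
    card_insert_of_notMem fun h ↦ hx (mem_filter.1 h).1] at h
  omega

lemma degOn_add_degOn_lt (hBF : BookFree r G) (hst : G.Adj s t) (hsx : G.Adj s x)
    (htx : G.Adj t x) (hx : x ∉ U) : G.degOn U s + G.degOn U t < #U + r := by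
  have := G.degOn_add_degOn_le U s t
  have := hBF.card_filter_adj_adj_lt hst hsx htx hx
  omega

lemma degOn_le_of_adj (hBF : BookFree r G) (hst : G.Adj s t) {m : ℕ}
    (ht : #U ≤ G.degOn U t + m) : G.degOn U s ≤ r + m := by
  have := G.degOn_add_degOn_le U s t
  have := hBF.card_filter_adj_adj_le hst U
  omega

lemma degOn_add_degOn_add_degOn_add_three_le (hBF : BookFree r G) (hxy : G.Adj x y)
    (hyz : G.Adj y z) (hzx : G.Adj z x) (hx : x ∉ U) (hy : y ∉ U) (hz : z ∉ U) :
    G.degOn U x + G.degOn U y + G.degOn U z + 3 ≤ #U + 3 * r := by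
  have hunion := card_add_card_add_card_le_s1 {w ∈ U | G.Adj x w} {w ∈ U | G.Adj y w}
    {w ∈ U | G.Adj z w}
  have hU : #({w ∈ U | G.Adj x w} ∪ {w ∈ U | G.Adj y w} ∪ {w ∈ U | G.Adj z w}) ≤ #U :=
    card_le_card (union_subset (union_subset (filter_subset _ _) (filter_subset _ _))
      (filter_subset _ _))
  simp only [← filter_and] at hunion
  have hxy' := hBF.card_filter_adj_adj_lt hxy hzx.symm hyz hz
  have hxz' := hBF.card_filter_adj_adj_lt hzx.symm hxy hyz.symm hy
  have hyz' := hBF.card_filter_adj_adj_lt hyz hxy.symm hzx hx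
  simp only [degOn]
  omega

lemma degOn_add_degOn_add_degOn_add_two_le (hBF : BookFree r G) (hxy : G.Adj x y)
    (hyz : G.Adj y z) (hzx : G.Adj z x) {A B : Finset V} (hAB : Disjoint A B)
    (hx : x ∉ A ∪ B) (hy : y ∉ A ∪ B) (hz : z ∉ A ∪ B) {m : ℕ}
    (hmA : ∀ w ∈ B, #A ≤ G.degOn A w + m)
    (hmB : ∀ w ∈ A, #B ≤ G.degOn B w + m) (hA : 5 * r ≤ #A) (hB : 5 * r ≤ #B) :
    G.degOn (A ∪ B) x + G.degOn (A ∪ B) y + G.degOn (A ∪ B) z + 2 ≤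
      #A + #B + 2 * r + m := by
  have side (t : V) : G.degOn B t = 0 ∨ G.degOn A t = 0 ∨
      (G.degOn A t ≤ r + m ∧ G.degOn B t ≤ r + m) := by
    by_contra! h
    obtain ⟨hb, ha, h⟩ := h
    obtain ⟨w, hw⟩ := card_pos.1 (Nat.pos_of_ne_zero hb)
    obtain ⟨w', hw'⟩ := card_pos.1 (Nat.pos_of_ne_zero ha)
    rw [mem_filter] at hw hw'
    exact (h (hBF.degOn_le_of_adj hw.2 (hmA w hw.1))).not_ge
      (hBF.degOn_le_of_adj hw'.2 (hmB w' hw'.1))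
  have hR := hBF.degOn_add_degOn_add_degOn_add_three_le hxy hyz hzx hx hy hz
  simp only [Finset.mem_union, not_or] at hx hy hz
  have hA3 := hBF.degOn_add_degOn_add_degOn_add_three_le hxy hyz hzx hx.1 hy.1 hz.1
  have hB3 := hBF.degOn_add_degOn_add_degOn_add_three_le hxy hyz hzx hx.2 hy.2 hz.2
  have hxyA := hBF.degOn_add_degOn_lt hxy hzx.symm hyz hz.1
  have hxyB := hBF.degOn_add_degOn_lt hxy hzx.symm hyz hz.2
  have hxzA := hBF.degOn_add_degOn_lt hzx.symm hxy hyz.symm hy.1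
  have hxzB := hBF.degOn_add_degOn_lt hzx.symm hxy hyz.symm hy.2
  have hyzA := hBF.degOn_add_degOn_lt hyz hxy.symm hzx hx.1
  have hyzB := hBF.degOn_add_degOn_lt hyz hxy.symm hzx hx.2
  rw [degOn_union hAB, degOn_union hAB, degOn_union hAB, card_union_of_disjoint hAB] at hR
  rw [degOn_union hAB, degOn_union hAB, degOn_union hAB]
  have := side x
  have := side y
  have := side z
  -- If two vertices of the triangle see both sides, their degrees are `O(r)` and the sizes of
  -- `A` and `B` absorb them. Otherwise two vertices see one side each: the pair bounds on the
  -- appropriate sides conclude, or the triple bound if all three see the same side.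
  omega

lemma four_mul_card_edgeFinset_le_of_triangle_of_colorable (hBF : BookFree r G) (hr : 1 ≤ r)
    (hxy : G.Adj x y) (hyz : G.Adj y z) (hzx : G.Adj z x)
    (hN : 12 * r ≤ #({x, y, z}ᶜ : Finset V))
    (hbip : (G.induce (({x, y, z}ᶜ : Finset V) : Set V)).Colorable 2) :
    4 * #G.edgeFinset ≤ (#({x, y, z}ᶜ : Finset V) + 2) ^ 2 + 8 * r := by
  have hxR : x ∉ ({x, y, z}ᶜ : Finset V) := by simp
  have hyR : y ∉ ({x, y, z}ᶜ : Finset V) := by simp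
  have hzR : z ∉ ({x, y, z}ᶜ : Finset V) := by simp
  have hsplit := G.two_mul_card_edgeFinset_le_of_triangle hxy hyz hzx
  have hR3 := hBF.degOn_add_degOn_add_degOn_add_three_le hxy hyz hzx hxR hyR hzR
  obtain ⟨A, B, hAB, hABR, hA, hB⟩ := G.exists_parts_of_colorable_induce hbip
  rw [← hABR] at hsplit hR3 hN hxR hyR hzR ⊢
  rw [sum_degOn_union_eq_two_mul hAB hA hB] at hsplit
  rw [card_union_of_disjoint hAB] at hR3 hN ⊢
  have he : ∑ v ∈ B, G.degOn A v ≤ #A * #B := by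
    simpa [mul_comm] using sum_le_card_nsmul B _ _ fun v _ ↦ G.degOn_le_card A v
  have hsq : (#A + #B + 2) ^ 2 = (#A + #B) ^ 2 + 4 * (#A + #B) + 4 := by ring
  by_cases hbal : 2 * #A ≤ #A + #B + 2 * r ∧ 2 * #B ≤ #A + #B + 2 * r
  · have hD := hBF.degOn_add_degOn_add_degOn_add_two_le hxy hyz hzx hAB hxR hyR hzR
      (fun w hw ↦ card_le_degOn_add_card_mul_card_sub_sum hw)
      (fun w hw ↦ by
        simpa only [sum_degOn_comm B A, mul_comm #B] using
          card_le_degOn_add_card_mul_card_sub_sum (G := G) (A := B) hw)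
      (by omega) (by omega)
    have := four_mul_le_sq_add (#A) (#B)
    rw [mul_assoc] at this
    omega
  · have : 4 * (#A * #B) + 4 * r + 4 ≤ (#A + #B) ^ 2 := by
      rcases not_and_or.1 hbal with h | h
      · exact four_mul_mul_add_le_sq hr (by omega)
      · simpa only [mul_comm #A, add_comm #A] using
          four_mul_mul_add_le_sq hr (a := #B) (b := #A) (by omega)
    omega

lemma four_mul_card_edgeFinset_le_of_triangle (hBF : BookFree r G) (hxy : G.Adj x y)
    (hyz : G.Adj y z) (hzx : G.Adj z x) (hN : 12 * r < #({x, y, z}ᶜ : Finset V)) {k : ℕ}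
    (hR : 4 * #(G.induce (({x, y, z}ᶜ : Finset V) : Set V)).edgeFinset ≤
      (#({x, y, z}ᶜ : Finset V) - 1) ^ 2 + 8 * r + 4 * r * (k + 3)) :
    4 * #G.edgeFinset ≤ (#({x, y, z}ᶜ : Finset V) + 2) ^ 2 + 8 * r + 4 * r * k := by
  have hsplit := G.two_mul_card_edgeFinset_le_of_triangle hxy hyz hzx
  have hR3 := hBF.degOn_add_degOn_add_degOn_add_three_le hxy hyz hzx
    (U := {x, y, z}ᶜ) (by simp) (by simp) (by simp)
  rw [← G.two_mul_card_edgeFinset_induce] at hsplit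
  obtain ⟨N, hRN⟩ : ∃ N, #({x, y, z}ᶜ : Finset V) = N + 1 :=
    ⟨_, (Nat.sub_add_cancel (by omega)).symm⟩
  rw [hRN] at hR3 hR hN ⊢
  rw [Nat.add_sub_cancel, mul_add] at hR
  have hsq : (N + 1 + 2) ^ 2 = N ^ 2 + 6 * N + 9 := by ring
  omega

end

theorem four_mul_card_edgeFinset_le (hr : 1 ≤ r) (n : ℕ) {V : Type} [Fintype V] [DecidableEq V]
    {G : SimpleGraph V} [DecidableRel G.Adj] (hn : Fintype.card V = n) (hG : ¬G.Colorable 2)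
    (hBF : BookFree r G) : 4 * #G.edgeFinset ≤ (n - 1) ^ 2 + 8 * r + 4 * r * (144 * r - n) := by
  induction n using Nat.strong_induction_on generalizing V with
  | _ n ih =>
  subst hn
  by_cases hsmall : Fintype.card V < 16 * r
  · have := G.four_mul_card_edgeFinset_le_two_mul
    have h1 : Fintype.card V * (Fintype.card V - 1) ≤ 16 * r * (16 * r) :=
      Nat.mul_le_mul (by omega) (by omega)
    have h2 : 4 * r * (128 * r) ≤ 4 * r * (144 * r - Fintype.card V) :=
      Nat.mul_le_mul_left _ (by omega)
    nlinarith
  by_cases hK3 : G.CliqueFree 3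
  · have := hK3.four_mul_card_edgeFinset_le_of_not_colorable hG
    omega
  obtain ⟨t, ht⟩ : ∃ t, G.IsNClique 3 t := by simpa [CliqueFree] using hK3
  obtain ⟨x, y, z, hxy, hxz, hyz, rfl⟩ := is3Clique_iff.1 ht
  have hR : #({x, y, z}ᶜ : Finset V) + 3 = Fintype.card V := by
    rw [card_compl, ← ht.card_eq]
    have := card_le_univ ({x, y, z} : Finset V)
    omega
  rw [← hR, show #({x, y, z}ᶜ : Finset V) + 3 - 1 = #({x, y, z}ᶜ : Finset V) + 2 by omega]
  by_cases hbip : (G.induce (({x, y, z}ᶜ : Finset V) : Set V)).Colorable 2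
  · have := hBF.four_mul_card_edgeFinset_le_of_triangle_of_colorable hr hxy hyz hxz.symm
      (by omega) hbip
    omega
  · refine hBF.four_mul_card_edgeFinset_le_of_triangle hxy hyz hxz.symm (by omega) ?_
    refine (ih _ (by omega) (Fintype.card_coe _) hbip (hBF.induce _)).trans ?_
    gcongr
    omega

end BookFree

/-- For every integer `r ≥ 1` and all sufficiently large `n`, every non-bipartite
`B_{r+1}`-free simple graph `G` on `n` vertices satisfies `e(G) ≤ ⌊(n-1)²/4⌋ + 2r`. -/
theorem stmt_1 (r : ℕ) (hr : 1 ≤ r) :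
    ∃ n₀ : ℕ, ∀ n : ℕ, n₀ ≤ n →
      ∀ G : SimpleGraph (Fin n), ¬ G.Colorable 2 → BookFree r G →
        G.edgeSet.ncard ≤ (n - 1) ^ 2 / 4 + 2 * r := by
  refine ⟨144 * r, fun n hn G hG hBF ↦ ?_⟩
  classical
  have h := hBF.four_mul_card_edgeFinset_le hr n (Fintype.card_fin n) hG
  rw [Nat.sub_eq_zero_of_le hn, mul_zero, add_zero] at h
  rw [← coe_edgeFinset, Set.ncard_coe_finset]
  omega
end

section
/- Let r ≥ 1 and n ≥ 2r + 1 be integers. The graph K^{r,r}_{⌊(n−1)/2⌋,⌈(n−1)/2⌉} is non-bipartite, B_{r+1}-free, and has exactly ⌊(n−1)²/4⌋ + 2r edges. -/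
open SimpleGraph Set

/-- The graph `K^{r,r}_{a,b}` obtained from the complete bipartite graph `K_{a,b}` by adding a
new vertex (here `none`) adjacent to exactly the first `r` vertices in each of the two parts. -/
def KErr (a b r : ℕ) : SimpleGraph (Option (Fin a ⊕ Fin b)) :=
  SimpleGraph.fromRel (fun x y =>
    (∃ (i : Fin a) (j : Fin b), x = some (Sum.inl i) ∧ y = some (Sum.inr j)) ∨
    (∃ i : Fin a, x = none ∧ y = some (Sum.inl i) ∧ (i : ℕ) < r) ∨
    (∃ j : Fin b, x = none ∧ y = some (Sum.inr j) ∧ (j : ℕ) < r))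

variable {a b r : ℕ}

lemma kerr_adj_none (w : Option (Fin a ⊕ Fin b)) :
    (KErr a b r).Adj none w ↔
      (∃ i : Fin a, w = some (Sum.inl i) ∧ (i : ℕ) < r) ∨
      (∃ j : Fin b, w = some (Sum.inr j) ∧ (j : ℕ) < r) := by
  simp only [KErr, fromRel_adj]
  constructor
  · rintro ⟨hne, (⟨i,j,h,-⟩|⟨i,-,rfl,hi⟩|⟨j,-,rfl,hj⟩)|(⟨i,j,-,h⟩|⟨i,-,h,-⟩|⟨j,-,h,-⟩)⟩
    · exact absurd h (by simp)
    · exact Or.inl ⟨i, rfl, hi⟩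
    · exact Or.inr ⟨j, rfl, hj⟩
    · exact absurd h (by simp)
    · exact absurd h (by simp)
    · exact absurd h (by simp)
  · rintro (⟨i, rfl, hi⟩|⟨j, rfl, hj⟩)
    · exact ⟨by simp, Or.inl (Or.inr (Or.inl ⟨i, trivial, rfl, hi⟩))⟩
    · exact ⟨by simp, Or.inl (Or.inr (Or.inr ⟨j, trivial, rfl, hj⟩))⟩

lemma kerr_adj_inl (i : Fin a) (w : Option (Fin a ⊕ Fin b)) :
    (KErr a b r).Adj (some (Sum.inl i)) w ↔
      (∃ j : Fin b, w = some (Sum.inr j)) ∨ (w = none ∧ (i : ℕ) < r) := by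
  simp only [KErr, fromRel_adj]
  constructor
  · rintro ⟨hne, (⟨i',j,h,rfl⟩|⟨i',h,-⟩|⟨j,h,-⟩)|(⟨i',j,rfl,h⟩|⟨i',rfl,h,hi⟩|⟨j,h2,h,-⟩)⟩
    · exact Or.inl ⟨j, rfl⟩
    · exact absurd h (by simp)
    · exact absurd h (by simp)
    · exact absurd h (by simp)
    · obtain rfl : i' = i := by simpa using h.symm
      exact Or.inr ⟨rfl, hi⟩
    · exact absurd h (by simp)
  · rintro (⟨j, rfl⟩|⟨rfl, hi⟩)
    · exact ⟨by simp, Or.inl (Or.inl ⟨i, j, rfl, rfl⟩)⟩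
    · exact ⟨by simp, Or.inr (Or.inr (Or.inl ⟨i, rfl, rfl, hi⟩))⟩

lemma kerr_adj_inr (j : Fin b) (w : Option (Fin a ⊕ Fin b)) :
    (KErr a b r).Adj (some (Sum.inr j)) w ↔
      (∃ i : Fin a, w = some (Sum.inl i)) ∨ (w = none ∧ (j : ℕ) < r) := by
  simp only [KErr, fromRel_adj]
  constructor
  · rintro ⟨hne, (⟨i,j',h,-⟩|⟨i,h,-⟩|⟨j',h,-⟩)|(⟨i,j',rfl,h⟩|⟨i,rfl,h,-⟩|⟨j',rfl,h,hj⟩)⟩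
    · exact absurd h (by simp)
    · exact absurd h (by simp)
    · exact absurd h (by simp)
    · exact Or.inl ⟨i, rfl⟩
    · exact absurd h (by simp)
    · obtain rfl : j' = j := by simpa using h.symm
      exact Or.inr ⟨rfl, hj⟩
  · rintro (⟨i, rfl⟩|⟨rfl, hj⟩)
    · exact ⟨by simp, Or.inr (Or.inl ⟨i, j, rfl, rfl⟩)⟩
    · exact ⟨by simp, Or.inr (Or.inr (Or.inr ⟨j, rfl, rfl, hj⟩))⟩

lemma common_none_inl (hrb : r ≤ b) (i : Fin a) :
    ({w | (KErr a b r).Adj none w ∧ (KErr a b r).Adj (some (Sum.inl i)) w}).ncard ≤ r := by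
  have hsub : {w | (KErr a b r).Adj none w ∧ (KErr a b r).Adj (some (Sum.inl i)) w} ⊆
      (fun k : Fin r => (some (Sum.inr (Fin.castLE hrb k)) : Option (Fin a ⊕ Fin b))) '' univ := by
    rintro w ⟨hw1, hw2⟩
    rw [kerr_adj_none] at hw1
    rw [kerr_adj_inl] at hw2
    rcases hw1 with ⟨i', rfl, _⟩ | ⟨j', rfl, hj⟩
    · rcases hw2 with ⟨j', h⟩ | ⟨h, -⟩ <;> simp at h
    · exact ⟨⟨(j' : ℕ), hj⟩, trivial, by simp [Fin.ext_iff]⟩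
  refine le_trans (Set.ncard_le_ncard hsub (Set.toFinite _)) ?_
  rw [Set.ncard_image_of_injective _ (fun k k' h => by
    simp only [Option.some.injEq, Sum.inr.injEq, Fin.ext_iff, Fin.coe_castLE] at h
    exact Fin.ext h), Set.ncard_univ]
  simp

lemma common_none_inr (hra : r ≤ a) (j : Fin b) :
    ({w | (KErr a b r).Adj none w ∧ (KErr a b r).Adj (some (Sum.inr j)) w}).ncard ≤ r := by
  have hsub : {w | (KErr a b r).Adj none w ∧ (KErr a b r).Adj (some (Sum.inr j)) w} ⊆
      (fun k : Fin r => (some (Sum.inl (Fin.castLE hra k)) : Option (Fin a ⊕ Fin b))) '' univ := by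
    rintro w ⟨hw1, hw2⟩
    rw [kerr_adj_none] at hw1
    rw [kerr_adj_inr] at hw2
    rcases hw1 with ⟨i', rfl, hi⟩ | ⟨j', rfl, _⟩
    · exact ⟨⟨(i' : ℕ), hi⟩, trivial, by simp [Fin.ext_iff]⟩
    · rcases hw2 with ⟨i', h⟩ | ⟨h, -⟩ <;> simp at h
  refine le_trans (Set.ncard_le_ncard hsub (Set.toFinite _)) ?_
  rw [Set.ncard_image_of_injective _ (fun k k' h => by
    simp only [Option.some.injEq, Sum.inl.injEq, Fin.ext_iff, Fin.coe_castLE] at h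
    exact Fin.ext h), Set.ncard_univ]
  simp

lemma common_inl_inr (hr : 1 ≤ r) (i : Fin a) (j : Fin b) :
    ({w | (KErr a b r).Adj (some (Sum.inl i)) w ∧ (KErr a b r).Adj (some (Sum.inr j)) w}).ncard ≤ r := by
  have hsub : {w | (KErr a b r).Adj (some (Sum.inl i)) w ∧ (KErr a b r).Adj (some (Sum.inr j)) w}
      ⊆ {(none : Option (Fin a ⊕ Fin b))} := by
    rintro w ⟨hw1, hw2⟩
    rw [kerr_adj_inl] at hw1
    rw [kerr_adj_inr] at hw2
    rcases hw1 with ⟨j', rfl⟩ | ⟨rfl, -⟩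
    · rcases hw2 with ⟨i', h⟩ | ⟨h, -⟩ <;> simp at h
    · rfl
  calc _ ≤ ({(none : Option (Fin a ⊕ Fin b))} : Set _).ncard :=
        Set.ncard_le_ncard hsub (Set.finite_singleton _)
    _ = 1 := Set.ncard_singleton _
    _ ≤ r := hr

lemma comm_set {V : Type*} (G : SimpleGraph V) (u v : V) :
    {w | G.Adj u w ∧ G.Adj v w} = {w | G.Adj v w ∧ G.Adj u w} := by
  ext w; exact and_comm

lemma kerr_bookfree (hr : 1 ≤ r) (hra : r ≤ a) (hrb : r ≤ b) :
    BookFree r (KErr a b r) := by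
  intro u v huv
  rcases u with _ | (i | j) <;> rcases v with _ | (i' | j')
  · simp [kerr_adj_none] at huv
  · exact common_none_inl hrb i'
  · exact common_none_inr hra j'
  · rw [comm_set]; exact common_none_inl hrb i
  · rw [kerr_adj_inl] at huv; rcases huv with ⟨j, h⟩ | ⟨h, -⟩ <;> simp at h
  · exact common_inl_inr hr i j'
  · rw [comm_set]; exact common_none_inr hra j
  · rw [comm_set]; exact common_inl_inr hr i' j
  · rw [kerr_adj_inr] at huv; rcases huv with ⟨i, h⟩ | ⟨h, -⟩ <;> simp at h

lemma kerr_not_colorable (hr : 1 ≤ r) (hra : r ≤ a) (hrb : r ≤ b) :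
    ¬ (KErr a b r).Colorable 2 := by
  rintro ⟨C⟩
  have h0a : 0 < a := hr.trans hra
  have h0b : 0 < b := hr.trans hrb
  have h1 : (KErr a b r).Adj none (some (Sum.inl ⟨0, h0a⟩)) :=
    (kerr_adj_none _).2 (Or.inl ⟨⟨0, h0a⟩, rfl, hr⟩)
  have h2 : (KErr a b r).Adj none (some (Sum.inr ⟨0, h0b⟩)) :=
    (kerr_adj_none _).2 (Or.inr ⟨⟨0, h0b⟩, rfl, hr⟩)
  have h3 : (KErr a b r).Adj (some (Sum.inl ⟨0, h0a⟩)) (some (Sum.inr ⟨0, h0b⟩)) :=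
    (kerr_adj_inl _ _).2 (Or.inl ⟨⟨0, h0b⟩, rfl⟩)
  have e1 := Fin.val_ne_of_ne (C.valid h1)
  have e2 := Fin.val_ne_of_ne (C.valid h2)
  have e3 := Fin.val_ne_of_ne (C.valid h3)
  have l1 := (C none).isLt
  have l2 := (C (some (Sum.inl ⟨0, h0a⟩))).isLt
  have l3 := (C (some (Sum.inr ⟨0, h0b⟩))).isLt
  omega

lemma kerr_edges (hra : r ≤ a) (hrb : r ≤ b) :
    (KErr a b r).edgeSet.ncard = a * b + 2 * r := by
  classical
  let f1 : Fin a × Fin b → Sym2 (Option (Fin a ⊕ Fin b)) := fun p =>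
    s(some (Sum.inl p.1), some (Sum.inr p.2))
  let f2 : Fin r → Sym2 (Option (Fin a ⊕ Fin b)) := fun k =>
    s(none, some (Sum.inl (Fin.castLE hra k)))
  let f3 : Fin r → Sym2 (Option (Fin a ⊕ Fin b)) := fun k =>
    s(none, some (Sum.inr (Fin.castLE hrb k)))
  have hE : (KErr a b r).edgeSet = (f1 '' univ ∪ f2 '' univ) ∪ f3 '' univ := by
    apply Set.Subset.antisymm
    · intro e he
      induction e using Sym2.ind with
      | _ x y =>
        rw [mem_edgeSet] at he
        rcases x with _ | (i | j)
        · rw [kerr_adj_none] at he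
          rcases he with ⟨i, rfl, hi⟩ | ⟨j, rfl, hj⟩
          · exact Or.inl (Or.inr ⟨⟨(i : ℕ), hi⟩, trivial, rfl⟩)
          · exact Or.inr ⟨⟨(j : ℕ), hj⟩, trivial, rfl⟩
        · rw [kerr_adj_inl] at he
          rcases he with ⟨j, rfl⟩ | ⟨rfl, hi⟩
          · exact Or.inl (Or.inl ⟨(i, j), trivial, rfl⟩)
          · exact Or.inl (Or.inr ⟨⟨(i : ℕ), hi⟩, trivial, Sym2.eq_swap⟩)
        · rw [kerr_adj_inr] at he
          rcases he with ⟨i, rfl⟩ | ⟨rfl, hj⟩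
          · exact Or.inl (Or.inl ⟨(i, j), trivial, Sym2.eq_swap⟩)
          · exact Or.inr ⟨⟨(j : ℕ), hj⟩, trivial, Sym2.eq_swap⟩
    · rintro e ((⟨⟨i, j⟩, -, rfl⟩ | ⟨k, -, rfl⟩) | ⟨k, -, rfl⟩)
      · exact (kerr_adj_inl _ _).2 (Or.inl ⟨j, rfl⟩)
      · exact (kerr_adj_none _).2 (Or.inl ⟨_, rfl, by simp [Fin.coe_castLE, k.isLt]⟩)
      · exact (kerr_adj_none _).2 (Or.inr ⟨_, rfl, by simp [Fin.coe_castLE, k.isLt]⟩)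
  have hinj1 : Function.Injective f1 := by
    rintro ⟨i, j⟩ ⟨i', j'⟩ h
    simp only [f1, Sym2.eq_iff, Option.some.injEq, Sum.inl.injEq, Sum.inr.injEq] at h
    rcases h with ⟨rfl, rfl⟩ | ⟨h, -⟩
    · rfl
    · simp at h
  have hinj2 : Function.Injective f2 := by
    intro k k' h
    simp only [f2, Sym2.eq_iff, Option.some.injEq, Sum.inl.injEq] at h
    rcases h with ⟨-, h⟩ | ⟨h, -⟩
    · exact Fin.ext (by simpa [Fin.ext_iff] using h)
    · simp at h
  have hinj3 : Function.Injective f3 := by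
    intro k k' h
    simp only [f3, Sym2.eq_iff, Option.some.injEq, Sum.inr.injEq] at h
    rcases h with ⟨-, h⟩ | ⟨h, -⟩
    · exact Fin.ext (by simpa [Fin.ext_iff] using h)
    · simp at h
  have hd23 : Disjoint (f2 '' univ) (f3 '' univ) := by
    rw [Set.disjoint_left]
    rintro e ⟨k, -, rfl⟩ ⟨k', -, h⟩
    simp [f2, f3, Sym2.eq_iff] at h
  have hd123 : Disjoint (f1 '' univ ∪ f2 '' univ) (f3 '' univ) := by
    rw [Set.disjoint_left]
    rintro e (⟨⟨i, j⟩, -, rfl⟩ | ⟨k, -, rfl⟩) ⟨k', -, h⟩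
    · simp [f1, f3, Sym2.eq_iff] at h
    · exact hd23.le_bot ⟨⟨k, trivial, rfl⟩, ⟨k', trivial, h⟩⟩
  have hd12 : Disjoint (f1 '' univ) (f2 '' univ) := by
    rw [Set.disjoint_left]
    rintro e ⟨⟨i, j⟩, -, rfl⟩ ⟨k, -, h⟩
    simp [f1, f2, Sym2.eq_iff] at h
  rw [hE, Set.ncard_union_eq hd123, Set.ncard_union_eq hd12,
    Set.ncard_image_of_injective _ hinj1, Set.ncard_image_of_injective _ hinj2,
    Set.ncard_image_of_injective _ hinj3]
  simp only [Set.ncard_univ, Nat.card_eq_fintype_card, Fintype.card_prod, Fintype.card_fin]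
  ring


/-- For integers `r ≥ 1` and `n ≥ 2r + 1`, the graph `K^{r,r}_{⌊(n-1)/2⌋, ⌈(n-1)/2⌉}` is
non-bipartite, `B_{r+1}`-free, and has exactly `⌊(n-1)²/4⌋ + 2r` edges. -/
theorem stmt_2 (r n : ℕ) (hr : 1 ≤ r) (hn : 2 * r + 1 ≤ n) :
    ¬ (KErr ((n - 1) / 2) (n / 2) r).Colorable 2 ∧
    BookFree r (KErr ((n - 1) / 2) (n / 2) r) ∧
    (KErr ((n - 1) / 2) (n / 2) r).edgeSet.ncard = (n - 1) ^ 2 / 4 + 2 * r := by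

  have hra : r ≤ (n - 1) / 2 := by omega
  have hrb : r ≤ n / 2 := by omega
  have hab : (n - 1) / 2 * (n / 2) = (n - 1) ^ 2 / 4 := by
    rcases Nat.even_or_odd n with ⟨m, rfl⟩ | ⟨m, rfl⟩
    · obtain ⟨k, rfl⟩ : ∃ k, m = k + 1 := ⟨m - 1, by omega⟩
      have h1 : (k + 1 + (k + 1) - 1) / 2 = k := by omega
      have h2 : (k + 1 + (k + 1)) / 2 = k + 1 := by omega
      have h3 : (k + 1 + (k + 1) - 1) ^ 2 = 4 * (k * (k + 1)) + 1 := by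
        have h : k + 1 + (k + 1) - 1 = 2 * k + 1 := by omega
        rw [h]; ring
      rw [h1, h2, h3, Nat.mul_add_div (by norm_num)]
      norm_num
    · have h1 : (2 * m + 1 - 1) / 2 = m := by omega
      have h2 : (2 * m + 1) / 2 = m := by omega
      have h3 : (2 * m + 1 - 1) ^ 2 = 4 * (m * m) := by
        have h : 2 * m + 1 - 1 = 2 * m := by omega
        rw [h]; ring
      rw [h1, h2, h3, Nat.mul_div_cancel_left _ (by norm_num)]
  refine ⟨kerr_not_colorable hr hra hrb, kerr_bookfree hr hra hrb, ?_⟩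
  rw [kerr_edges hra hrb, hab]
end

section
/- Let n ≥ 6. Every graph in the family 𝒢₁(B₂) is non-bipartite, B₂-free, and has exactly ⌊(n−1)²/4⌋ + 2 edges. -/
open SimpleGraph Set

/-- The member of the family `𝒢₁(B₂)` determined by `S₁ ⊆ S* = Fin a` and `T₁ ⊆ T* = Fin b`:
it is obtained from the complete bipartite graph with parts `S*`, `T*` and a disjoint triangle
`w₁w₂w₃` (the three elements `0, 1, 2` of `Fin 3`) by joining `w₃` to all vertices of
`S₁ ∪ T₁`, `w₁` to all vertices of `S* \ S₁`, and `w₂` to all vertices of `T* \ T₁`. -/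
def G1B2 (a b : ℕ) (S1 : Finset (Fin a)) (T1 : Finset (Fin b)) :
    SimpleGraph (Fin a ⊕ Fin b ⊕ Fin 3) :=
  SimpleGraph.fromRel (fun x y =>
    (∃ (i : Fin a) (j : Fin b), x = Sum.inl i ∧ y = Sum.inr (Sum.inl j)) ∨
    (∃ k l : Fin 3, k ≠ l ∧ x = Sum.inr (Sum.inr k) ∧ y = Sum.inr (Sum.inr l)) ∨
    (∃ i ∈ S1, x = Sum.inr (Sum.inr 2) ∧ y = Sum.inl i) ∨
    (∃ j ∈ T1, x = Sum.inr (Sum.inr 2) ∧ y = Sum.inr (Sum.inl j)) ∨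
    (∃ i : Fin a, i ∉ S1 ∧ x = Sum.inr (Sum.inr 0) ∧ y = Sum.inl i) ∨
    (∃ j : Fin b, j ∉ T1 ∧ x = Sum.inr (Sum.inr 1) ∧ y = Sum.inr (Sum.inl j)))

/-!
Every vertex of `S* ∪ T*` has exactly one neighbour on the triangle: `w₃` or `w₁` for `s ∈ S*`,
`w₃` or `w₂` for `t ∈ T*`. So two adjacent vertices have at most one common neighbour: for
`s ∈ S*`, `t ∈ T*` it can only be `w₃`; for `s` and its triangle neighbour `w` a common neighbour
is some `t ∈ T*` attached to `w`, which forces `w = w₃` and `(s, t) ∈ S₁ × T₁`, a set with at most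
one element (symmetrically for `t ∈ T*`); two triangle vertices share only the third one. With `a = |S*|`, `b = |T*|`, the handshake lemma gives
`ab + (a + b) + 3 = (a + 1)(b + 1) + 2` edges, and `(a + 1)(b + 1) = ⌊(n-1)/2⌋ ⌈(n-1)/2⌉ = ⌊(n-1)²/4⌋`.
-/

lemma Fin.subsingleton_setOf_ne_and_ne {k l : Fin 3} (hkl : k ≠ l) :
    {m | m ≠ k ∧ m ≠ l}.Subsingleton := fun m hm m' hm' =>
  (by decide : ∀ k l m m' : Fin 3, k ≠ l → m ≠ k → m ≠ l → m' ≠ k → m' ≠ l → m = m')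
    k l m m' hkl hm.1 hm.2 hm'.1 hm'.2

lemma SimpleGraph.degree_eq_sum_ite {V : Type*} [Fintype V] (G : SimpleGraph V)
    [DecidableRel G.Adj] (v : V) : G.degree v = ∑ w, if G.Adj v w then 1 else 0 :=
  G.degree_eq_sum_if_adj v

namespace G1B2

variable {a b : ℕ} {S1 : Finset (Fin a)} {T1 : Finset (Fin b)} {i i' : Fin a} {j j' : Fin b}
  {k l : Fin 3}

@[simp] lemma not_adj_inl_inl : ¬ (G1B2 a b S1 T1).Adj (.inl i) (.inl i') := by
  simp [G1B2]

@[simp] lemma adj_inl_inr_inl : (G1B2 a b S1 T1).Adj (.inl i) (.inr (.inl j)) := by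
  simp [G1B2]

@[simp] lemma adj_inr_inl_inl : (G1B2 a b S1 T1).Adj (.inr (.inl j)) (.inl i) :=
  adj_inl_inr_inl.symm

@[simp] lemma not_adj_inr_inl_inr_inl :
    ¬ (G1B2 a b S1 T1).Adj (.inr (.inl j)) (.inr (.inl j')) := by
  simp [G1B2]

@[simp] lemma adj_inl_inr_inr :
    (G1B2 a b S1 T1).Adj (.inl i) (.inr (.inr k)) ↔ k = if i ∈ S1 then 2 else 0 := by
  by_cases hi : i ∈ S1 <;> simp [G1B2, hi, eq_comm]

@[simp] lemma adj_inr_inr_inl :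
    (G1B2 a b S1 T1).Adj (.inr (.inr k)) (.inl i) ↔ k = if i ∈ S1 then 2 else 0 := by
  rw [adj_comm, adj_inl_inr_inr]

@[simp] lemma adj_inr_inl_inr_inr :
    (G1B2 a b S1 T1).Adj (.inr (.inl j)) (.inr (.inr k)) ↔ k = if j ∈ T1 then 2 else 1 := by
  by_cases hj : j ∈ T1 <;> simp [G1B2, hj, eq_comm]

@[simp] lemma adj_inr_inr_inr_inl :
    (G1B2 a b S1 T1).Adj (.inr (.inr k)) (.inr (.inl j)) ↔ k = if j ∈ T1 then 2 else 1 := by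
  rw [adj_comm, adj_inr_inl_inr_inr]

@[simp] lemma adj_inr_inr_inr_inr :
    (G1B2 a b S1 T1).Adj (.inr (.inr k)) (.inr (.inr l)) ↔ k ≠ l := by
  simpa [G1B2] using Or.inl

section Degrees

variable [DecidableRel (G1B2 a b S1 T1).Adj]

lemma degree_inl : (G1B2 a b S1 T1).degree (.inl i) = b + 1 := by
  rw [degree_eq_sum_ite]
  simp only [Fintype.sum_sum_type]
  simp

lemma degree_inr_inl : (G1B2 a b S1 T1).degree (.inr (.inl j)) = a + 1 := by
  rw [degree_eq_sum_ite]
  simp only [Fintype.sum_sum_type]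
  simp

lemma sum_degree_inr_inr : ∑ k, (G1B2 a b S1 T1).degree (.inr (.inr k)) = a + b + 6 := by
  simp only [degree_eq_sum_ite, Fintype.sum_sum_type, Finset.sum_add_distrib, adj_inr_inr_inl,
    adj_inr_inr_inr_inl, adj_inr_inr_inr_inr]
  rw [Finset.sum_comm (t := Finset.univ (α := Fin a)),
    Finset.sum_comm (t := Finset.univ (α := Fin b))]
  simp [Fin.sum_univ_three]
  omega

end Degrees

lemma ncard_edgeSet : (G1B2 a b S1 T1).edgeSet.ncard = (a + 1) * (b + 1) + 2 := by
  classical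
  have handshake := (G1B2 a b S1 T1).sum_degrees_eq_twice_card_edges
  simp only [Fintype.sum_sum_type, degree_inl, degree_inr_inl, sum_degree_inr_inr,
    Finset.sum_const, Finset.card_univ, Fintype.card_fin, smul_eq_mul] at handshake
  rw [← coe_edgeFinset, ncard_coe_finset]
  linarith

lemma not_colorable_two : ¬ (G1B2 a b S1 T1).Colorable 2 := fun hc =>
  have triangle : (G1B2 a b S1 T1).IsNClique 3 {.inr (.inr 0), .inr (.inr 1), .inr (.inr 2)} :=
    is3Clique_triple_iff.mpr (by simp)
  triangle.not_cliqueFree (hc.cliqueFree (by norm_num))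

lemma eq_of_adj_inl_inr_inr (hk : (G1B2 a b S1 T1).Adj (.inl i) (.inr (.inr k)))
    (hl : (G1B2 a b S1 T1).Adj (.inl i) (.inr (.inr l))) : k = l := by
  rw [adj_inl_inr_inr] at hk hl
  exact hk.trans hl.symm

lemma eq_of_adj_inr_inl_inr_inr (hk : (G1B2 a b S1 T1).Adj (.inr (.inl j)) (.inr (.inr k)))
    (hl : (G1B2 a b S1 T1).Adj (.inr (.inl j)) (.inr (.inr l))) : k = l := by
  rw [adj_inr_inl_inr_inr] at hk hl
  exact hk.trans hl.symm

lemma eq_two_and_mem_of_adj_inr_inr (hi : (G1B2 a b S1 T1).Adj (.inr (.inr k)) (.inl i))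
    (hj : (G1B2 a b S1 T1).Adj (.inr (.inr k)) (.inr (.inl j))) : k = 2 ∧ i ∈ S1 ∧ j ∈ T1 := by
  rw [adj_inr_inr_inl] at hi
  rw [adj_inr_inr_inr_inl] at hj
  split_ifs at hi hj <;> simp_all

lemma commonNeighbors_inl_inr_inl_subset :
    (G1B2 a b S1 T1).commonNeighbors (.inl i) (.inr (.inl j)) ⊆ {.inr (.inr 2)} := by
  intro x hx
  rw [mem_commonNeighbors] at hx
  obtain ⟨hi, hj⟩ := hx
  rcases x with i' | j' | m
  · exact absurd hi not_adj_inl_inl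
  · exact absurd hj not_adj_inr_inl_inr_inl
  · rw [(eq_two_and_mem_of_adj_inr_inr hi.symm hj.symm).1]
    rfl

lemma commonNeighbors_inl_inr_inr_subset (hik : (G1B2 a b S1 T1).Adj (.inl i) (.inr (.inr k))) :
    (G1B2 a b S1 T1).commonNeighbors (.inl i) (.inr (.inr k)) ⊆
      (fun p : Fin a × Fin b => .inr (.inl p.2)) '' ↑(S1 ×ˢ T1) := by
  intro x hx
  rw [mem_commonNeighbors] at hx
  obtain ⟨hi, hk⟩ := hx
  rcases x with i' | j | m
  · exact absurd hi not_adj_inl_inl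
  · obtain ⟨-, hiS, hjT⟩ := eq_two_and_mem_of_adj_inr_inr hik.symm hk
    exact ⟨(i, j), Finset.mem_product.mpr ⟨hiS, hjT⟩, rfl⟩
  · obtain rfl := eq_of_adj_inl_inr_inr hik hi
    exact absurd hk (G1B2 a b S1 T1).irrefl

lemma commonNeighbors_inr_inl_inr_inr_subset
    (hjk : (G1B2 a b S1 T1).Adj (.inr (.inl j)) (.inr (.inr k))) :
    (G1B2 a b S1 T1).commonNeighbors (.inr (.inl j)) (.inr (.inr k)) ⊆
      (fun p : Fin a × Fin b => .inl p.1) '' ↑(S1 ×ˢ T1) := by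
  intro x hx
  rw [mem_commonNeighbors] at hx
  obtain ⟨hj, hk⟩ := hx
  rcases x with i | j' | m
  · obtain ⟨-, hiS, hjT⟩ := eq_two_and_mem_of_adj_inr_inr hk hjk.symm
    exact ⟨(i, j), Finset.mem_product.mpr ⟨hiS, hjT⟩, rfl⟩
  · exact absurd hj not_adj_inr_inl_inr_inl
  · obtain rfl := eq_of_adj_inr_inl_inr_inr hjk hj
    exact absurd hk (G1B2 a b S1 T1).irrefl

lemma commonNeighbors_inr_inr_subset (hkl : k ≠ l) :
    (G1B2 a b S1 T1).commonNeighbors (.inr (.inr k)) (.inr (.inr l)) ⊆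
      (fun m => .inr (.inr m)) '' {m | m ≠ k ∧ m ≠ l} := by
  intro x hx
  rw [mem_commonNeighbors] at hx
  obtain ⟨hk, hl⟩ := hx
  rcases x with i | j | m
  · exact absurd (eq_of_adj_inl_inr_inr hk.symm hl.symm) hkl
  · exact absurd (eq_of_adj_inr_inl_inr_inr hk.symm hl.symm) hkl
  · rw [adj_inr_inr_inr_inr] at hk hl
    exact ⟨m, ⟨hk.symm, hl.symm⟩, rfl⟩

theorem bookFree_one (h : S1.card * T1.card ≤ 1) : BookFree 1 (G1B2 a b S1 T1) := by
  have hST : (↑(S1 ×ˢ T1) : Set (Fin a × Fin b)).Subsingleton := fun p hp q hq =>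
    Finset.card_le_one.mp (by rwa [Finset.card_product]) p hp q hq
  intro u v huv
  change ((G1B2 a b S1 T1).commonNeighbors u v).ncard ≤ 1
  rw [ncard_le_one_iff_subsingleton]
  rcases u with i | j | k <;> rcases v with i' | j' | k'
  · exact absurd huv not_adj_inl_inl
  · exact subsingleton_singleton.anti commonNeighbors_inl_inr_inl_subset
  · exact (hST.image _).anti (commonNeighbors_inl_inr_inr_subset huv)
  · rw [commonNeighbors_symm]
    exact subsingleton_singleton.anti commonNeighbors_inl_inr_inl_subset
  · exact absurd huv not_adj_inr_inl_inr_inl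
  · exact (hST.image _).anti (commonNeighbors_inr_inl_inr_inr_subset huv)
  · rw [commonNeighbors_symm]
    exact (hST.image _).anti (commonNeighbors_inl_inr_inr_subset huv.symm)
  · rw [commonNeighbors_symm]
    exact (hST.image _).anti (commonNeighbors_inr_inl_inr_inr_subset huv.symm)
  · have hkk' := adj_inr_inr_inr_inr.mp huv
    exact ((Fin.subsingleton_setOf_ne_and_ne hkk').image _).anti
      (commonNeighbors_inr_inr_subset hkk')

end G1B2

lemma Nat.div_two_mul_succ_div_two (m : ℕ) : m / 2 * ((m + 1) / 2) = m ^ 2 / 4 := by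
  rcases Nat.even_or_odd' m with ⟨k, rfl | rfl⟩
  · rw [show 2 * k / 2 = k by omega, show (2 * k + 1) / 2 = k by omega,
      show (2 * k) ^ 2 = 4 * (k * k) by ring]
    omega
  · rw [show (2 * k + 1) / 2 = k by omega, show (2 * k + 1 + 1) / 2 = k + 1 by omega,
      show (2 * k + 1) ^ 2 = 4 * (k * (k + 1)) + 1 by ring]
    omega

/-- For `n ≥ 6`, every graph in the family `𝒢₁(B₂)` (with parts of sizes `⌊(n-3)/2⌋` and
`⌈(n-3)/2⌉` and `|S₁|·|T₁| ≤ 1`) is non-bipartite, `B₂`-free, and has exactly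
`⌊(n-1)²/4⌋ + 2` edges. -/
theorem stmt_5 (n : ℕ) (hn : 6 ≤ n)
    (S1 : Finset (Fin ((n - 3) / 2))) (T1 : Finset (Fin ((n - 2) / 2)))
    (h : S1.card * T1.card ≤ 1) :
    ¬ (G1B2 ((n - 3) / 2) ((n - 2) / 2) S1 T1).Colorable 2 ∧
    BookFree 1 (G1B2 ((n - 3) / 2) ((n - 2) / 2) S1 T1) ∧
    (G1B2 ((n - 3) / 2) ((n - 2) / 2) S1 T1).edgeSet.ncard = (n - 1) ^ 2 / 4 + 2 := by
  refine ⟨G1B2.not_colorable_two, G1B2.bookFree_one h, ?_⟩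
  have parts : ((n - 3) / 2 + 1) * ((n - 2) / 2 + 1) = (n - 1) / 2 * ((n - 1 + 1) / 2) := by
    congr 1 <;> omega
  rw [G1B2.ncard_edgeSet, parts, Nat.div_two_mul_succ_div_two]
end

section
/- Let r ≥ 1 be an integer. For every ε > 0 there exists n₀ such that for all n ≥ n₀: if G is a non-bipartite B_{r+1}-free simple graph on n vertices with the maximum number of edges among such graphs, then e(G) ≥ (1/4 − ε)n², and for any partition V(G) = S ∪ T realizing a maximum cut one has e(S) + e(T) ≤ εn² and (1/2 − (3/2)√ε)n ≤ |S|, |T| ≤ (1/2 + (3/2)√ε)n, where e(S) and e(T) denote the numbers of edges inside S and inside T respectively. -/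
/-!
If `G'` is triangle-free and `A` is a maximum independent set of `G'`, every neighbourhood is
independent, so all degrees are at most `|A|` and `2 e(G') ≤ e(A, Aᶜ) + |A| |Aᶜ|`. A
`B_{r+1}`-free graph has at most `r n²` triangles, so by the triangle removal lemma it is
`(ε/4) n²`-close to a triangle-free graph; comparing cuts, every maximum cut `(S, T)` of it
satisfies `e(S) + e(T) + e(G) ≤ n²/4 + ε n²/2`. A blow-up of the pentagon gives
`e(G) ≥ n²/4 - 2n` for an extremal `G`, so `e(S) + e(T)` is small and
`|S| |T| ≥ e(S, T) ≥ (1 - 9ε) n²/4`, which forces `|S|` and `|T|` to be close to `n/2`.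
-/

open SimpleGraph Set

/-- `e(S)`: the number of edges of `G` with both endpoints in `S`. -/
noncomputable def edgesIn {V : Type*} (G : SimpleGraph V) (S : Set V) : ℕ :=
  {e ∈ G.edgeSet | ∀ v ∈ e, v ∈ S}.ncard

/-- `e(S, T)`: the number of edges of `G` with one endpoint in `S` and the other in `T`. -/
noncomputable def cutCount {V : Type*} (G : SimpleGraph V) (S T : Set V) : ℕ :=
  {e ∈ G.edgeSet | ∃ u ∈ S, ∃ v ∈ T, e = s(u, v)}.ncard

/-- `(S, T)` is a partition of the vertex set of `G` realizing a maximum cut. -/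
def IsMaxCut {V : Type*} (G : SimpleGraph V) (S T : Set V) : Prop :=
  S ∪ T = Set.univ ∧ S ∩ T = ∅ ∧
    ∀ S' T' : Set V, S' ∪ T' = Set.univ → S' ∩ T' = ∅ →
      cutCount G S' T' ≤ cutCount G S T

section Counting

variable {V : Type*} {G : SimpleGraph V} {S T : Set V}

lemma cutCount_eq_ncard_edgeSet_between (G : SimpleGraph V) (S T : Set V) :
    cutCount G S T = (G.between S T).edgeSet.ncard := by
  unfold cutCount
  congr 1
  ext e
  induction e using Sym2.ind with
  | _ x y =>
    simp only [Set.mem_ofPred_eq, mem_edgeSet, between_adj, Sym2.eq_iff]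
    constructor
    · rintro ⟨h, u, hu, v, hv, ⟨rfl, rfl⟩ | ⟨rfl, rfl⟩⟩ <;> tauto
    · rintro ⟨h, ⟨hx, hy⟩ | ⟨hx, hy⟩⟩
      · exact ⟨h, x, hx, y, hy, .inl ⟨rfl, rfl⟩⟩
      · exact ⟨h, y, hy, x, hx, .inr ⟨rfl, rfl⟩⟩

lemma cutCount_mono [Finite V] {G' : SimpleGraph V} (h : G' ≤ G) (S T : Set V) :
    cutCount G' S T ≤ cutCount G S T :=
  Set.ncard_le_ncard (fun _ ⟨he, hST⟩ ↦ ⟨edgeSet_mono h he, hST⟩) (Set.toFinite _)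

lemma cutCount_le_ncard_mul_ncard [Finite V] (h : Disjoint S T) :
    cutCount G S T ≤ S.ncard * T.ncard := by
  have := (between_isBipartiteWith (G := G) h).encard_edgeSet_le
  rw [← (Set.toFinite _).cast_ncard_eq, ← S.toFinite.cast_ncard_eq,
    ← T.toFinite.cast_ncard_eq] at this
  rw [cutCount_eq_ncard_edgeSet_between]
  exact_mod_cast this

lemma ncard_mul_ncard_le_ncard_edgeSet [Finite V] (h : ∀ u ∈ S, ∀ v ∈ T, G.Adj u v) :
    S.ncard * T.ncard ≤ G.edgeSet.ncard := by
  rw [← Set.ncard_prod, ← Set.InjOn.ncard_image (f := fun p : V × V ↦ s(p.1, p.2))]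
  · exact Set.ncard_le_ncard (by rintro _ ⟨⟨u, v⟩, ⟨hu, hv⟩, rfl⟩; exact h u hu v hv)
      (Set.toFinite _)
  · rintro ⟨u, v⟩ ⟨hu, hv⟩ ⟨u', v'⟩ ⟨hu', hv'⟩ huv
    rcases Sym2.eq_iff.1 huv with ⟨rfl, rfl⟩ | ⟨rfl, rfl⟩
    · rfl
    · exact absurd (h u hu u hv') (G.loopless.irrefl u)

lemma ncard_add_ncard_eq_card [Fintype V] (hcover : S ∪ T = Set.univ) (hdisj : S ∩ T = ∅) :
    S.ncard + T.ncard = Fintype.card V := by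
  rw [← Set.ncard_union_eq (Set.disjoint_iff_inter_eq_empty.2 hdisj), hcover, Set.ncard_univ,
    Nat.card_eq_fintype_card]

lemma ncard_edgeSet_eq_cutCount_add_edgesIn [Finite V] (hcover : S ∪ T = Set.univ)
    (hdisj : S ∩ T = ∅) :
    G.edgeSet.ncard = cutCount G S T + edgesIn G S + edgesIn G T := by
  have hmem (x : V) : x ∈ S ∨ x ∈ T := by simpa [← hcover] using Set.mem_univ x
  have hdisj' : Disjoint S T := Set.disjoint_iff_inter_eq_empty.2 hdisj
  unfold cutCount edgesIn
  rw [← Set.ncard_union_eq, ← Set.ncard_union_eq]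
  · congr 1
    ext e
    induction e using Sym2.ind with
    | _ x y =>
      simp only [Set.mem_union, Set.mem_ofPred_eq, mem_edgeSet, Sym2.mem_iff, forall_eq_or_imp,
        forall_eq, Sym2.eq_iff]
      grind [hmem x, hmem y]
  all_goals
    rw [Set.disjoint_left]
    intro e
    induction e using Sym2.ind with
    | _ x y =>
      simp only [Set.mem_union, Set.mem_ofPred_eq, Sym2.mem_iff, forall_eq_or_imp, forall_eq,
        Sym2.eq_iff]
      grind [hdisj'.notMem_of_mem_left (a := x), hdisj'.notMem_of_mem_left (a := y)]

end Counting

section Stability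

open Finset

variable {V : Type*} [Fintype V] [DecidableEq V] {G : SimpleGraph V}

lemma card_cliqueFinset_three_le [DecidableRel G.Adj] {r : ℕ} (hG : BookFree r G) :
    #(G.cliqueFinset 3) ≤ Fintype.card V ^ 2 * r := by
  have hcover : G.cliqueFinset 3 ⊆ (univ.filter fun p : V × V ↦ G.Adj p.1 p.2).biUnion
      fun p ↦ (univ.filter fun w ↦ G.Adj p.1 w ∧ G.Adj p.2 w).image fun w ↦ {p.1, p.2, w} := by
    intro t ht
    obtain ⟨a, b, c, hab, hac, hbc, rfl⟩ := is3Clique_iff.1 (mem_cliqueFinset_iff.1 ht)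
    simp only [Finset.mem_biUnion, Finset.mem_filter, Finset.mem_univ, true_and,
      Finset.mem_image]
    exact ⟨(a, b), hab, c, ⟨hac, hbc⟩, rfl⟩
  calc #(G.cliqueFinset 3)
      ≤ #(univ.filter fun p : V × V ↦ G.Adj p.1 p.2) * r := by
        refine (Finset.card_le_card hcover).trans (card_biUnion_le_card_mul _ _ _ fun p hp ↦ ?_)
        refine card_image_le.trans ?_
        simpa [← Set.ncard_coe_finset] using hG p.1 p.2 (mem_filter.1 hp).2
    _ ≤ Fintype.card V ^ 2 * r := by
        gcongr
        exact (card_filter_le _ _).trans_eq (by simp [sq])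

lemma card_cliqueFinset_three_lt [DecidableRel G.Adj] {r : ℕ} {c : ℝ} (hG : BookFree r G)
    (hr : r < c * Fintype.card V) :
    ((G.cliqueFinset 3).card : ℝ) < c * Fintype.card V ^ 3 := by
  have hV : (0 : ℝ) < Fintype.card V := by
    refine (Nat.cast_nonneg _).lt_of_ne fun h ↦ ?_
    rw [← h, mul_zero] at hr
    exact hr.not_ge r.cast_nonneg
  calc ((G.cliqueFinset 3).card : ℝ) ≤ Fintype.card V ^ 2 * r := by
        exact_mod_cast card_cliqueFinset_three_le hG
    _ < Fintype.card V ^ 2 * (c * Fintype.card V) := by gcongr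
    _ = c * Fintype.card V ^ 3 := by ring

lemma exists_two_mul_ncard_edgeSet_le_cutCount_add (hG : G.CliqueFree 3) :
    ∃ S T : Set V, S ∪ T = Set.univ ∧ S ∩ T = ∅ ∧
      2 * G.edgeSet.ncard ≤ cutCount G S T + S.ncard * T.ncard := by
  classical
  obtain ⟨A, hA⟩ := G.maximumIndepSet_exists
  have hdeg (v : V) : G.degree v ≤ #A := by
    rw [← card_neighborFinset_eq_degree]
    exact hA.maximum _ (by simpa using isIndepSet_neighborSet_of_triangleFree G hG v)
  have hbip : (G.between A ↑(Aᶜ)).IsBipartiteWith A ↑(Aᶜ) :=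
    between_isBipartiteWith (disjoint_coe.2 disjoint_compl_right)
  have hcut : ∑ v ∈ A, G.degree v = cutCount G A ↑(Aᶜ) := by
    rw [cutCount_eq_ncard_edgeSet_between, ← coe_edgeFinset, Set.ncard_coe_finset,
      ← isBipartiteWith_sum_degrees_eq_card_edges hbip]
    refine sum_congr rfl fun v hv ↦ ?_
    simp_rw [← card_neighborFinset_eq_degree]
    congr 1
    ext w
    simp only [mem_neighborFinset, between_adj, mem_coe, Finset.mem_compl]
    exact ⟨fun h ↦ ⟨h, .inl ⟨hv, fun hw ↦ hA.isIndepSet hv hw h.ne h⟩⟩, And.left⟩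
  have hsum : 2 * G.edgeSet.ncard = ∑ v ∈ A, G.degree v + ∑ v ∈ Aᶜ, G.degree v := by
    rw [sum_add_sum_compl, sum_degrees_eq_twice_card_edges, ← coe_edgeFinset,
      Set.ncard_coe_finset]
  have hcompl : ∑ v ∈ Aᶜ, G.degree v ≤ #Aᶜ * #A := by
    simpa using sum_le_card_nsmul Aᶜ _ _ fun v _ ↦ hdeg v
  refine ⟨A, ↑(Aᶜ), by simp, by simp, ?_⟩
  rw [Set.ncard_coe_finset, Set.ncard_coe_finset, hsum, ← hcut]
  linarith [Nat.mul_comm #A #Aᶜ]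

lemma edgesIn_add_edgesIn_add_ncard_edgeSet_le [DecidableRel G.Adj] {δ : ℝ}
    (hG : (#(G.cliqueFinset 3) : ℝ) < triangleRemovalBound δ * Fintype.card V ^ 3)
    {S T : Set V} (hST : IsMaxCut G S T) :
    (edgesIn G S + edgesIn G T + G.edgeSet.ncard : ℝ) ≤
      Fintype.card V ^ 2 / 4 + 2 * δ * Fintype.card V ^ 2 := by
  obtain ⟨hcover, hdisj, hmax⟩ := hST
  obtain ⟨G', hle, _, hremoved, hG'⟩ := triangle_removal hG
  obtain ⟨S', T', hcover', hdisj', hcut'⟩ := exists_two_mul_ncard_edgeSet_le_cutCount_add hG'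
  have hcut : cutCount G' S' T' ≤ cutCount G S T :=
    (cutCount_mono hle S' T').trans (hmax S' T' hcover' hdisj')
  have hsize : 4 * S'.ncard * T'.ncard ≤ Fintype.card V ^ 2 :=
    ncard_add_ncard_eq_card hcover' hdisj' ▸ four_mul_le_sq_add _ _
  have hpart := ncard_edgeSet_eq_cutCount_add_edgesIn (G := G) hcover hdisj
  simp only [← coe_edgeFinset, Set.ncard_coe_finset] at hpart hcut' ⊢
  push_cast at hremoved
  have hcutR : (cutCount G' S' T' : ℝ) ≤ cutCount G S T := by exact_mod_cast hcut
  have hsizeR : 4 * (S'.ncard : ℝ) * T'.ncard ≤ Fintype.card V ^ 2 := by exact_mod_cast hsize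
  have hpartR : (#G.edgeFinset : ℝ) = cutCount G S T + edgesIn G S + edgesIn G T := by
    exact_mod_cast hpart
  have hcutR' : 2 * (#G'.edgeFinset : ℝ) ≤ cutCount G' S' T' + S'.ncard * T'.ncard := by
    exact_mod_cast hcut'
  linarith

end Stability

section PentagonBlowup

variable {V W : Type*}

lemma colorable_of_colorable_comap {H : SimpleGraph W} {f : V → W} (hf : Function.Surjective f)
    {m : ℕ} (h : (H.comap f).Colorable m) : H.Colorable m :=
  h.of_hom ⟨Function.surjInv hf, by simp [Function.surjInv_eq hf]⟩

lemma bookFree_comap_of_cliqueFree_three {H : SimpleGraph W} (hH : H.CliqueFree 3) (f : V → W)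
    (r : ℕ) : BookFree r (H.comap f) := by
  classical
  intro u v huv
  have : {w | (H.comap f).Adj u w ∧ (H.comap f).Adj v w} = ∅ :=
    Set.eq_empty_of_forall_notMem fun w ⟨huw, hvw⟩ ↦
      hH {f u, f v, f w} (is3Clique_triple_iff.2 ⟨huv, huw, hvw⟩)
  rw [this, Set.ncard_empty]
  exact r.zero_le

lemma cycleGraph_five_cliqueFree_three : (cycleGraph 5).CliqueFree 3 := by
  intro t ht
  obtain ⟨a, b, c, hab, hac, hbc, -⟩ := is3Clique_iff.1 ht
  revert a b c
  decide

-- The singleton classes `0, 1, 2` keep the blow-up non-bipartite; the classes `[3, k)` and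
-- `[k, n)` carry almost all of its edges.
def pentagonBlowupLabel (k : ℕ) {n : ℕ} (i : Fin n) : Fin 5 :=
  if h : (i : ℕ) < 3 then ⟨i, by omega⟩ else if (i : ℕ) < k then 3 else 4

lemma pentagonBlowupLabel_surjective {k n : ℕ} (hk : 3 < k) (hkn : k < n) :
    Function.Surjective (pentagonBlowupLabel k (n := n)) := by
  intro j
  fin_cases j
  · exact ⟨⟨0, by omega⟩, by simp [pentagonBlowupLabel]⟩
  · exact ⟨⟨1, by omega⟩, by simp [pentagonBlowupLabel]⟩
  · exact ⟨⟨2, by omega⟩, by simp [pentagonBlowupLabel]⟩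
  · exact ⟨⟨3, by omega⟩, by simp [pentagonBlowupLabel, hk]⟩
  · exact ⟨⟨k, hkn⟩, by simp [pentagonBlowupLabel]; omega⟩

lemma mul_le_ncard_edgeSet_comap_pentagonBlowupLabel {k n : ℕ} (hkn : k ≤ n) :
    (k - 3) * (n - k) ≤ ((cycleGraph 5).comap (pentagonBlowupLabel k (n := n))).edgeSet.ncard := by
  have hX : (Fin.val ⁻¹' Set.Ico 3 k : Set (Fin n)).ncard = k - 3 := by
    rw [Set.ncard_preimage_of_injective_subset_range Fin.val_injective
      fun x hx ↦ ⟨⟨x, by grind⟩, rfl⟩, Set.ncard_Ico_nat]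
  have hY : (Fin.val ⁻¹' Set.Ico k n : Set (Fin n)).ncard = n - k := by
    rw [Set.ncard_preimage_of_injective_subset_range Fin.val_injective
      fun x hx ↦ ⟨⟨x, by grind⟩, rfl⟩, Set.ncard_Ico_nat]
  rw [← hX, ← hY]
  refine ncard_mul_ncard_le_ncard_edgeSet fun u hu v hv ↦ ?_
  simp only [Set.mem_preimage, Set.mem_Ico] at hu hv
  simp only [comap_adj, pentagonBlowupLabel, dif_neg (show ¬ (u : ℕ) < 3 by omega), if_pos hu.2,
    dif_neg (show ¬ (v : ℕ) < 3 by omega), if_neg (show ¬ (v : ℕ) < k by omega)]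
  decide

lemma exists_not_colorable_two_bookFree_le_ncard_edgeSet (r : ℕ) {n : ℕ} (hn : 5 ≤ n) :
    ∃ H : SimpleGraph (Fin n), ¬ H.Colorable 2 ∧ BookFree r H ∧
      (n : ℝ) ^ 2 / 4 - 2 * n ≤ H.edgeSet.ncard := by
  set k := (n + 3) / 2
  refine ⟨(cycleGraph 5).comap (pentagonBlowupLabel k), fun h ↦ ?_,
    bookFree_comap_of_cliqueFree_three cycleGraph_five_cliqueFree_three _ r, ?_⟩
  · have := (colorable_of_colorable_comap
      (pentagonBlowupLabel_surjective (by omega) (by omega)) h).chromaticNumber_le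
    rw [chromaticNumber_cycleGraph_of_odd 5 (by norm_num) (by decide)] at this
    exact absurd this (by decide)
  · have hcount : (((k - 3) * (n - k) : ℕ) : ℝ) ≤
        ((cycleGraph 5).comap (pentagonBlowupLabel k (n := n))).edgeSet.ncard := by
      exact_mod_cast mul_le_ncard_edgeSet_comap_pentagonBlowupLabel (k := k) (n := n) (by omega)
    refine le_trans ?_ hcount
    have h2k : (n : ℝ) + 2 ≤ 2 * k ∧ 2 * (k : ℝ) ≤ n + 3 := by
      constructor <;> norm_cast <;> omega
    push_cast [Nat.cast_sub (show 3 ≤ k by omega), Nat.cast_sub (show k ≤ n by omega)]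
    nlinarith

end PentagonBlowup

lemma le_and_le_of_four_mul_ge {s t n ε : ℝ} (hε : 0 ≤ ε) (hn : 0 ≤ n) (hsum : s + t = n)
    (hprod : (1 - 9 * ε) * n ^ 2 ≤ 4 * s * t) :
    (1 / 2 - 3 / 2 * √ε) * n ≤ s ∧ s ≤ (1 / 2 + 3 / 2 * √ε) * n := by
  have h : (s - t) ^ 2 ≤ (3 * √ε * n) ^ 2 := by
    subst hsum
    rw [mul_pow, mul_pow, Real.sq_sqrt hε]
    nlinarith
  obtain ⟨h₁, h₂⟩ := abs_le_of_sq_le_sq' h (by positivity)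
  constructor <;> nlinarith

lemma edgesIn_le_and_ncard_near_half {V : Type*} [Fintype V] {G : SimpleGraph V}
    {S T : Set V} {n : ℕ} {ε : ℝ} (hcover : S ∪ T = Set.univ) (hdisj : S ∩ T = ∅) (hε : 0 ≤ ε)
    (hV : Fintype.card V = n)
    (hlarge : 4 * (n : ℝ) ≤ ε * n ^ 2) (hlow : (n : ℝ) ^ 2 / 4 - 2 * n ≤ G.edgeSet.ncard)
    (hstab : (edgesIn G S + edgesIn G T + G.edgeSet.ncard : ℝ) ≤ n ^ 2 / 4 + ε / 2 * n ^ 2) :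
    (edgesIn G S + edgesIn G T : ℝ) ≤ ε * n ^ 2 ∧
      (1 / 2 - 3 / 2 * √ε) * n ≤ S.ncard ∧ S.ncard ≤ (1 / 2 + 3 / 2 * √ε) * n ∧
      (1 / 2 - 3 / 2 * √ε) * n ≤ T.ncard ∧ T.ncard ≤ (1 / 2 + 3 / 2 * √ε) * n := by
  have hpart : (G.edgeSet.ncard : ℝ) = cutCount G S T + edgesIn G S + edgesIn G T := by
    exact_mod_cast ncard_edgeSet_eq_cutCount_add_edgesIn hcover hdisj
  have hcut : (cutCount G S T : ℝ) ≤ S.ncard * T.ncard := by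
    exact_mod_cast cutCount_le_ncard_mul_ncard (Set.disjoint_iff_inter_eq_empty.2 hdisj)
  have hsum : (S.ncard : ℝ) + T.ncard = n := by
    exact_mod_cast hV ▸ ncard_add_ncard_eq_card hcover hdisj
  have hprod : (1 - 9 * ε) * n ^ 2 ≤ 4 * S.ncard * T.ncard := by nlinarith
  obtain ⟨hS₁, hS₂⟩ := le_and_le_of_four_mul_ge hε n.cast_nonneg hsum hprod
  obtain ⟨hT₁, hT₂⟩ := le_and_le_of_four_mul_ge (s := T.ncard) (t := S.ncard) hε
    n.cast_nonneg (by linarith) (by linarith)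
  exact ⟨by nlinarith, hS₁, hS₂, hT₁, hT₂⟩

theorem stmt_7_general (r : ℕ) (ε : ℝ) (hε : 0 < ε) :
    ∃ n₀ : ℕ, ∀ n : ℕ, n₀ ≤ n →
      ∀ G : SimpleGraph (Fin n), ¬ G.Colorable 2 → BookFree r G →
        (∀ H : SimpleGraph (Fin n), ¬ H.Colorable 2 → BookFree r H →
          H.edgeSet.ncard ≤ G.edgeSet.ncard) →
        ((1 / 4 - ε) * (n : ℝ) ^ 2 ≤ (G.edgeSet.ncard : ℝ)) ∧
        ∀ S T : Set (Fin n), IsMaxCut G S T →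
          ((edgesIn G S + edgesIn G T : ℝ) ≤ ε * (n : ℝ) ^ 2 ∧
           (1 / 2 - 3 / 2 * Real.sqrt ε) * (n : ℝ) ≤ (S.ncard : ℝ) ∧
           (S.ncard : ℝ) ≤ (1 / 2 + 3 / 2 * Real.sqrt ε) * (n : ℝ) ∧
           (1 / 2 - 3 / 2 * Real.sqrt ε) * (n : ℝ) ≤ (T.ncard : ℝ) ∧
           (T.ncard : ℝ) ≤ (1 / 2 + 3 / 2 * Real.sqrt ε) * (n : ℝ)) := by
  classical
  set c := triangleRemovalBound (ε / 4)
  have hc : 0 < c := triangleRemovalBound_pos (by positivity)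
  refine ⟨⌈r / c⌉₊ + ⌈4 / ε⌉₊ + 5, fun n hn G _ hGr hGmax ↦ ?_⟩
  have hrn : (r : ℝ) < c * Fintype.card (Fin n) := by
    rw [Fintype.card_fin, ← div_lt_iff₀' hc]
    exact (Nat.le_ceil _).trans_lt (by exact_mod_cast (by omega : ⌈r / c⌉₊ < n))
  have hlarge : 4 * (n : ℝ) ≤ ε * n ^ 2 := by
    have : 4 / ε ≤ n := (Nat.le_ceil _).trans (by exact_mod_cast (by omega : ⌈4 / ε⌉₊ ≤ n))
    rw [div_le_iff₀ hε] at this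
    nlinarith
  obtain ⟨H, hH, hHr, hHe⟩ :=
    exists_not_colorable_two_bookFree_le_ncard_edgeSet r (n := n) (by omega)
  have hlow : (n : ℝ) ^ 2 / 4 - 2 * n ≤ G.edgeSet.ncard :=
    hHe.trans (by exact_mod_cast hGmax H hH hHr)
  refine ⟨by nlinarith, fun S T hST ↦ edgesIn_le_and_ncard_near_half hST.1 hST.2.1 hε.le
    (Fintype.card_fin n) hlarge hlow ?_⟩
  have := edgesIn_add_edgesIn_add_ncard_edgeSet_le (card_cliqueFinset_three_lt hGr hrn) hST
  rw [Fintype.card_fin] at this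
  linarith

/-- Let `r ≥ 1`.  For every `ε > 0` there is `n₀` such that for all `n ≥ n₀`: if `G` is a
non-bipartite `B_{r+1}`-free graph on `n` vertices with the maximum number of edges among such
graphs, then `e(G) ≥ (1/4 - ε)n²`, and any maximum-cut partition `V(G) = S ∪ T` satisfies
`e(S) + e(T) ≤ εn²` and `(1/2 - (3/2)√ε)n ≤ |S|, |T| ≤ (1/2 + (3/2)√ε)n`. -/
theorem stmt_7 (r : ℕ) (hr : 1 ≤ r) (ε : ℝ) (hε : 0 < ε) :
    ∃ n₀ : ℕ, ∀ n : ℕ, n₀ ≤ n →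
      ∀ G : SimpleGraph (Fin n), ¬ G.Colorable 2 → BookFree r G →
        (∀ H : SimpleGraph (Fin n), ¬ H.Colorable 2 → BookFree r H →
          H.edgeSet.ncard ≤ G.edgeSet.ncard) →
        ((1 / 4 - ε) * (n : ℝ) ^ 2 ≤ (G.edgeSet.ncard : ℝ)) ∧
        ∀ S T : Set (Fin n), IsMaxCut G S T →
          ((edgesIn G S + edgesIn G T : ℝ) ≤ ε * (n : ℝ) ^ 2 ∧
           (1 / 2 - 3 / 2 * Real.sqrt ε) * (n : ℝ) ≤ (S.ncard : ℝ) ∧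
           (S.ncard : ℝ) ≤ (1 / 2 + 3 / 2 * Real.sqrt ε) * (n : ℝ) ∧
           (1 / 2 - 3 / 2 * Real.sqrt ε) * (n : ℝ) ≤ (T.ncard : ℝ) ∧
           (T.ncard : ℝ) ≤ (1 / 2 + 3 / 2 * Real.sqrt ε) * (n : ℝ)) :=
  stmt_7_general r ε hε
end

section
/- Let r ≥ 1 be an integer and ε > 0 with 60r√ε < 1 and 90√ε < 1. For all sufficiently large n the following holds. Let G be a B_{r+1}-free simple graph on n vertices with a partition V(G) = S ∪ T satisfying |S|, |T| ≤ (1/2 + (3/2)√ε)n, let L = {v ∈ V(G) : d(v) ≤ (1/2 − 4√ε)n}, let W = {v ∈ S : d_S(v) ≥ (7/2)√ε·n} ∪ {v ∈ T : d_T(v) ≥ (7/2)√ε·n}, and set S̃ = S \ (L ∪ W) and T̃ = T \ (L ∪ W). Then every vertex u with d(u) ≥ 20√ε·n has either no neighbour in S̃ or no neighbour in T̃. -/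
open SimpleGraph Set

/-- `d_X(v)`: the number of neighbours of `v` lying in `X`. -/
noncomputable def degIn {V : Type*} (G : SimpleGraph V) (X : Set V) (v : V) : ℕ :=
  {w ∈ X | G.Adj v w}.ncard

lemma deg_split {n : ℕ} (G : SimpleGraph (Fin n)) (S T : Set (Fin n))
    (hST : S ∪ T = Set.univ) (hd : S ∩ T = ∅) (v : Fin n) :
    (G.neighborSet v).ncard = degIn G S v + degIn G T v := by
  rw [degIn, degIn, ← Set.ncard_union_eq ?_ (Set.toFinite _) (Set.toFinite _)]
  · congr 1
    ext w
    have hw : w ∈ S ∪ T := hST ▸ Set.mem_univ w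
    simp only [SimpleGraph.mem_neighborSet, Set.mem_union, Set.mem_setOf_eq]
    rcases hw with h | h <;> tauto
  · rw [Set.disjoint_iff_inter_eq_empty]
    rw [Set.eq_empty_iff_forall_notMem] at hd ⊢
    intro w hw
    exact hd w ⟨hw.1.1, hw.2.1⟩

lemma inter_lb {α : Type*} [Fintype α] (A B S : Set α) (hA : A ⊆ S) (hB : B ⊆ S) :
    A.ncard + B.ncard ≤ S.ncard + (A ∩ B).ncard := by
  rw [← Set.ncard_union_add_ncard_inter A B (Set.toFinite _) (Set.toFinite _)]
  have : (A ∪ B).ncard ≤ S.ncard := Set.ncard_le_ncard (Set.union_subset hA hB) (Set.toFinite _)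
  omega


/-- Let `r ≥ 1` and `ε > 0` with `60r√ε < 1` and `90√ε < 1`.  For all sufficiently large `n`:
if `G` is a `B_{r+1}`-free graph on `n` vertices with a partition `V(G) = S ∪ T`,
`|S|, |T| ≤ (1/2 + (3/2)√ε)n`, `L` is the set of vertices of degree at most `(1/2 - 4√ε)n`,
`W = W₁ ∪ W₂` with `W₁ = {v ∈ S : d_S(v) ≥ (7/2)√ε n}`, `W₂ = {v ∈ T : d_T(v) ≥ (7/2)√ε n}`,
`S̃ = S \ (L ∪ W)` and `T̃ = T \ (L ∪ W)`, then every vertex `u` with `d(u) ≥ 20√ε·n` has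
either no neighbour in `S̃` or no neighbour in `T̃`. -/
theorem stmt_10 (r : ℕ) (hr : 1 ≤ r) (ε : ℝ) (hε : 0 < ε)
    (h1 : 60 * (r : ℝ) * Real.sqrt ε < 1) (h2 : 90 * Real.sqrt ε < 1) :
    ∃ n₀ : ℕ, ∀ n : ℕ, n₀ ≤ n →
      ∀ G : SimpleGraph (Fin n), BookFree r G →
      ∀ S T : Set (Fin n), S ∪ T = Set.univ → S ∩ T = ∅ →
        ((S.ncard : ℝ) ≤ (1 / 2 + 3 / 2 * Real.sqrt ε) * (n : ℝ)) →
        ((T.ncard : ℝ) ≤ (1 / 2 + 3 / 2 * Real.sqrt ε) * (n : ℝ)) →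
        ∀ L W Stil Ttil : Set (Fin n),
          L = {v | ((G.neighborSet v).ncard : ℝ) ≤ (1 / 2 - 4 * Real.sqrt ε) * (n : ℝ)} →
          W = {v ∈ S | (7 / 2 : ℝ) * Real.sqrt ε * (n : ℝ) ≤ (degIn G S v : ℝ)} ∪
              {v ∈ T | (7 / 2 : ℝ) * Real.sqrt ε * (n : ℝ) ≤ (degIn G T v : ℝ)} →
          Stil = S \ (L ∪ W) → Ttil = T \ (L ∪ W) →
          ∀ u : Fin n, 20 * Real.sqrt ε * (n : ℝ) ≤ ((G.neighborSet u).ncard : ℝ) →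
            (∀ x ∈ Stil, ¬ G.Adj u x) ∨ (∀ x ∈ Ttil, ¬ G.Adj u x) := by
  set s := Real.sqrt ε with hsdef
  have hs : 0 < s := Real.sqrt_pos.mpr hε
  refine ⟨⌈((r : ℝ) + 1) / s⌉₊, fun n hn G hBF S T hST hdisj hScard hTcard
    L W Stil Ttil hL hW hStil hTtil u hu => ?_⟩
  have hrn : (r : ℝ) + 1 ≤ s * n := by
    have h1 : ((r : ℝ) + 1) / s ≤ (⌈((r : ℝ) + 1) / s⌉₊ : ℝ) := Nat.le_ceil _
    have h2 : ((⌈((r : ℝ) + 1) / s⌉₊ : ℕ) : ℝ) ≤ (n : ℝ) := Nat.cast_le.mpr hn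
    calc (r : ℝ) + 1 = ((r : ℝ) + 1) / s * s := by field_simp
    _ ≤ n * s := by nlinarith
    _ = s * n := mul_comm _ _
  by_contra hcon
  push_neg at hcon
  obtain ⟨⟨x, hxStil, hux⟩, ⟨y, hyTtil, huy⟩⟩ := hcon
  subst hStil hTtil hL hW
  obtain ⟨hxS, hxnot⟩ := hxStil
  obtain ⟨hyT, hynot⟩ := hyTtil
  simp only [Set.mem_union, Set.mem_setOf_eq, not_or, not_le, not_and] at hxnot hynot
  obtain ⟨hxL, hxW1, hxW2⟩ := hxnot
  obtain ⟨hyL, hyW1, hyW2⟩ := hynot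
  have hxdeg : (1 / 2 - 4 * s) * n < ((G.neighborSet x).ncard : ℝ) := hxL
  have hydeg : (1 / 2 - 4 * s) * n < ((G.neighborSet y).ncard : ℝ) := hyL
  have hxSsmall : ((degIn G S x : ℝ)) < 7 / 2 * s * n := hxW1 hxS
  have hyTsmall : ((degIn G T y : ℝ)) < 7 / 2 * s * n := hyW2 hyT
  have hxsplit := deg_split G S T hST hdisj x
  have hysplit := deg_split G S T hST hdisj y
  have husplit := deg_split G S T hST hdisj u
  -- cast to reals
  have hxsplitR : ((G.neighborSet x).ncard : ℝ) = (degIn G S x : ℝ) + (degIn G T x : ℝ) := by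
    exact_mod_cast congrArg (Nat.cast : ℕ → ℝ) hxsplit
  have hysplitR : ((G.neighborSet y).ncard : ℝ) = (degIn G S y : ℝ) + (degIn G T y : ℝ) := by
    exact_mod_cast congrArg (Nat.cast : ℕ → ℝ) hysplit
  have husplitR : ((G.neighborSet u).ncard : ℝ) = (degIn G S u : ℝ) + (degIn G T u : ℝ) := by
    exact_mod_cast congrArg (Nat.cast : ℕ → ℝ) husplit
  -- common neighbour bounds from book-freeness
  have hcy : ({w : Fin n | G.Adj u w ∧ G.Adj y w}).ncard ≤ r := hBF u y huy
  have hcx : ({w : Fin n | G.Adj u w ∧ G.Adj x w}).ncard ≤ r := hBF u x hux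
  rcases le_or_gt (10 * s * n) ((degIn G S u : ℝ)) with hcase | hcase
  · -- many neighbours of u in S; use y (whose non-nbrs in S are few)
    have hsub1 : {w ∈ S | G.Adj u w} ⊆ S := fun w hw => hw.1
    have hsub2 : {w ∈ S | G.Adj y w} ⊆ S := fun w hw => hw.1
    have hkey := inter_lb {w ∈ S | G.Adj u w} {w ∈ S | G.Adj y w} S hsub1 hsub2
    have hsubc : {w ∈ S | G.Adj u w} ∩ {w ∈ S | G.Adj y w} ⊆ {w : Fin n | G.Adj u w ∧ G.Adj y w} :=
      fun w hw => ⟨hw.1.2, hw.2.2⟩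
    have hmono : ({w ∈ S | G.Adj u w} ∩ {w ∈ S | G.Adj y w}).ncard ≤
        ({w : Fin n | G.Adj u w ∧ G.Adj y w}).ncard :=
      Set.ncard_le_ncard hsubc (Set.toFinite _)
    have hkeyR : (degIn G S u : ℝ) + (degIn G S y : ℝ) ≤ (S.ncard : ℝ) + (r : ℝ) := by
      have : degIn G S u + degIn G S y ≤ S.ncard + r := by
        rw [degIn, degIn]; omega
      exact_mod_cast this
    linarith
  · have hTu : 10 * s * n ≤ (degIn G T u : ℝ) := by linarith
    have hsub1 : {w ∈ T | G.Adj u w} ⊆ T := fun w hw => hw.1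
    have hsub2 : {w ∈ T | G.Adj x w} ⊆ T := fun w hw => hw.1
    have hkey := inter_lb {w ∈ T | G.Adj u w} {w ∈ T | G.Adj x w} T hsub1 hsub2
    have hsubc : {w ∈ T | G.Adj u w} ∩ {w ∈ T | G.Adj x w} ⊆ {w : Fin n | G.Adj u w ∧ G.Adj x w} :=
      fun w hw => ⟨hw.1.2, hw.2.2⟩
    have hmono : ({w ∈ T | G.Adj u w} ∩ {w ∈ T | G.Adj x w}).ncard ≤
        ({w : Fin n | G.Adj u w ∧ G.Adj x w}).ncard :=
      Set.ncard_le_ncard hsubc (Set.toFinite _)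
    have hkeyR : (degIn G T u : ℝ) + (degIn G T x : ℝ) ≤ (T.ncard : ℝ) + (r : ℝ) := by
      have : degIn G T u + degIn G T x ≤ T.ncard + r := by
        rw [degIn, degIn]; omega
      exact_mod_cast this
    linarith
end

section
/- Let n ≥ 3 and let G be a non-bipartite simple graph on n vertices with e(G) ≥ ⌊(n−1)²/4⌋ + 2. Then G contains a triangle; equivalently, a shortest odd cycle of G has length 3. -/
/-!
Take a shortest odd closed walk `p`, of length `ℓ`, in a triangle-free non-bipartite graph; then
`ℓ ≥ 5`. Any walk `q` between two vertices of `p` closes up both arcs of `p` between them, and one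
of the two closed walks is odd, hence no shorter than `p`. With `q` trivial, a single edge, or a
path of length two, this shows that `p` is a chordless cycle and that every vertex has at most two
neighbours on it. So with `m = n - ℓ` vertices off the cycle, `G` has at most `ℓ` edges on the
cycle, `2m` edges between the cycle and the rest, and by Mantel `⌊m² / 4⌋` edges among the rest,
and `ℓ + 2m + ⌊m² / 4⌋ ≤ ⌊(n - 1)² / 4⌋ + 1` because `ℓ ≥ 5`.
-/

open Finset

lemma Nat.add_two_mul_add_sq_div_four_le {l m : ℕ} (hl : 5 ≤ l) :
    l + 2 * m + m ^ 2 / 4 ≤ (l + m - 1) ^ 2 / 4 + 1 := by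
  obtain ⟨k, rfl⟩ : ∃ k, l = k + 5 := ⟨l - 5, by omega⟩
  have hsq : 4 * (k + 4 + 2 * m) + m ^ 2 ≤ (k + 5 + m - 1) ^ 2 := by
    rw [show k + 5 + m - 1 = k + 4 + m by omega]
    nlinarith
  have := Nat.div_le_div_right (c := 4) hsq
  rw [Nat.mul_add_div (by norm_num)] at this
  omega

namespace SimpleGraph

variable {V : Type*} {G : SimpleGraph V}

theorem CliqueFree.card_edgeFinset_le_sq_div_four [Fintype V] [DecidableRel G.Adj]
    (h : G.CliqueFree 3) : #G.edgeFinset ≤ Fintype.card V ^ 2 / 4 := by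
  refine (h.card_edgeFinset_le (r := 2)).trans ?_
  rw [Nat.choose_eq_zero_of_lt (Nat.mod_lt _ two_pos), add_zero, Nat.add_one_sub_one, mul_one]
  exact Nat.div_le_div_right (Nat.sub_le _ _)

lemma card_edgeFinset_le_add_sum_add [Fintype V] [DecidableEq V] [DecidableRel G.Adj]
    (s : Finset V) :
    #G.edgeFinset ≤ #{e ∈ G.edgeFinset | e.toFinset ⊆ s} + ∑ v ∈ sᶜ, #{w ∈ s | G.Adj v w} +
      #(G.induce (↑sᶜ : Set V)).edgeFinset := by
  rw [← card_filter_edgeFinset_toFinset_subset]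
  have hsub : G.edgeFinset ⊆ {e ∈ G.edgeFinset | e.toFinset ⊆ s} ∪
      sᶜ.biUnion (fun v => {w ∈ s | G.Adj v w}.image (s(v, ·))) ∪
      {e ∈ G.edgeFinset | e.toFinset ⊆ sᶜ} := by
    intro e he
    induction e using Sym2.ind with | _ x y => ?_
    have hxy : G.Adj x y := by simpa using he
    simp only [mem_union, mem_filter, he, true_and, mem_biUnion, mem_image, mem_compl,
      subset_iff, Sym2.mem_toFinset, Sym2.mem_iff, forall_eq_or_imp, forall_eq]
    by_cases hx : x ∈ s <;> by_cases hy : y ∈ s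
    · tauto
    · exact Or.inl (Or.inr ⟨y, hy, x, ⟨hx, hxy.symm⟩, Sym2.eq_swap⟩)
    · exact Or.inl (Or.inr ⟨x, hx, y, ⟨hy, hxy⟩, rfl⟩)
    · tauto
  refine (card_le_card hsub).trans ((card_union_le _ _).trans ?_)
  gcongr
  refine (card_union_le _ _).trans ?_
  gcongr
  exact card_biUnion_le.trans (sum_le_sum fun v _ => card_image_le)

def Walk.IsShortestOddLoop {u : V} (p : G.Walk u u) : Prop :=
  Odd p.length ∧ ∀ v (q : G.Walk v v), Odd q.length → p.length ≤ q.length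

theorem exists_isShortestOddLoop (h : ¬G.Colorable 2) :
    ∃ u, ∃ p : G.Walk u u, p.IsShortestOddLoop := by
  classical
  have hex : ∃ k, ∃ u, ∃ p : G.Walk u u, Odd p.length ∧ p.length = k := by
    simp_rw [two_colorable_iff_forall_loop_even, not_forall, Nat.not_even_iff_odd] at h
    obtain ⟨u, p, hp⟩ := h
    exact ⟨_, u, p, hp, rfl⟩
  obtain ⟨u, p, hodd, hlen⟩ := Nat.find_spec hex
  exact ⟨u, p, hodd, fun v q hq => hlen ▸ Nat.find_min' hex ⟨v, q, hq, rfl⟩⟩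

namespace Walk.IsShortestOddLoop

variable {u : V} {p : G.Walk u u}

lemma le_sub_add_length_of_odd (hp : p.IsShortestOddLoop) {i j : ℕ} (hij : i ≤ j)
    (hj : j ≤ p.length) (q : G.Walk (p.getVert i) (p.getVert j))
    (hq : Odd (j - i + q.length)) : p.length ≤ j - i + q.length := by
  have hend : (p.drop i).getVert (j - i) = p.getVert j := by
    rw [drop_getVert, Nat.add_sub_cancel' hij]
  let arc := ((p.drop i).take (j - i)).copy rfl hend
  have harc : arc.length = j - i := by
    simp only [arc, length_copy, take_length, drop_length]
    omega
  simpa [harc] using hp.2 _ (arc.append q.reverse) (by simpa [harc] using hq)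

lemma sub_le_length_of_even (hp : p.IsShortestOddLoop) {i j : ℕ} (hij : i ≤ j)
    (hj : j ≤ p.length) (q : G.Walk (p.getVert i) (p.getVert j))
    (hq : Even (j - i + q.length)) : j - i ≤ q.length := by
  have hodd := Nat.odd_iff.1 hp.1
  rw [Nat.even_iff] at hq
  have hlen := hp.2 _ (((p.drop j).append (p.take i)).append q) (by
    simp only [length_append, drop_length, take_length, Nat.odd_iff]
    omega)
  simp only [length_append, drop_length, take_length] at hlen
  omega

lemma getVert_injOn (hp : p.IsShortestOddLoop) : Set.InjOn p.getVert (Set.Iio p.length) := by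
  intro i hi j hj hij
  simp only [Set.mem_Iio] at hi hj
  wlog h : i ≤ j generalizing i j
  · exact (this hij.symm hj hi (by omega)).symm
  let q : G.Walk (p.getVert i) (p.getVert j) := Walk.nil.copy rfl hij
  have h1 := hp.le_sub_add_length_of_odd h hj.le q
  have h2 := hp.sub_le_length_of_even h hj.le q
  simp only [q, length_copy, length_nil, Nat.odd_iff, Nat.even_iff] at h1 h2
  omega

lemma mk_getVert_mem_edges (hp : p.IsShortestOddLoop) {i j : ℕ} (hi : i < p.length)
    (hj : j < p.length) (h : G.Adj (p.getVert i) (p.getVert j)) :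
    s(p.getVert i, p.getVert j) ∈ p.edges := by
  wlog hij : i ≤ j generalizing i j
  · rw [Sym2.eq_swap]
    exact this hj hi h.symm (by omega)
  have h1 := hp.le_sub_add_length_of_odd hij hj.le h.toWalk
  have h2 := hp.sub_le_length_of_even hij hj.le h.toWalk
  have hodd := Nat.odd_iff.1 hp.1
  simp only [Adj.toWalk, length_cons, length_nil, Nat.odd_iff, Nat.even_iff] at h1 h2
  rw [mk_mem_edges_iff_exists]
  by_cases hji : j = i + 1
  · exact ⟨i, hi, by rw [hji]⟩
  · obtain ⟨rfl, rfl⟩ : i = 0 ∧ j = p.length - 1 := by omega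
    refine ⟨p.length - 1, by omega, ?_⟩
    rw [Nat.sub_add_cancel (by omega), getVert_length, getVert_zero, Sym2.eq_swap]

lemma sub_eq_two_or_eq_length_sub_two (hp : p.IsShortestOddLoop) {v : V} {i j : ℕ}
    (hij : i < j) (hj : j < p.length) (hvi : G.Adj v (p.getVert i))
    (hvj : G.Adj v (p.getVert j)) : j - i = 2 ∨ j - i = p.length - 2 := by
  let q : G.Walk (p.getVert i) (p.getVert j) := .cons hvi.symm (.cons hvj .nil)
  have h1 := hp.le_sub_add_length_of_odd hij.le hj.le q
  have h2 := hp.sub_le_length_of_even hij.le hj.le q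
  have hodd := Nat.odd_iff.1 hp.1
  simp only [q, length_cons, length_nil, Nat.odd_iff, Nat.even_iff] at h1 h2
  omega

lemma card_filter_adj_getVert_le_two [DecidableRel G.Adj] (hp : p.IsShortestOddLoop)
    (h5 : 5 ≤ p.length) (v : V) : #{i ∈ range p.length | G.Adj v (p.getVert i)} ≤ 2 := by
  set N := {i ∈ range p.length | G.Adj v (p.getVert i)}
  have hdist : ∀ i ∈ N, ∀ j ∈ N, i ≠ j →
      i + 2 = j ∨ j + 2 = i ∨ i + (p.length - 2) = j ∨ j + (p.length - 2) = i := by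
    simp only [N, mem_filter, mem_range]
    intro i hi j hj hij
    rcases Nat.lt_or_gt_of_ne hij with h | h
    · have := hp.sub_eq_two_or_eq_length_sub_two h hj.1 hi.2 hj.2
      omega
    · have := hp.sub_eq_two_or_eq_length_sub_two h hi.1 hj.2 hi.2
      omega
  by_contra! h3
  obtain ⟨a, ha, b, hb, c, hc, hab, hac, hbc⟩ := two_lt_card.1 h3
  have := hdist a ha b hb hab
  have := hdist a ha c hc hac
  have := hdist b hb c hc hbc
  have hodd := Nat.odd_iff.1 hp.1
  omega

lemma five_le_length (hp : p.IsShortestOddLoop) (hG : G.CliqueFree 3) : 5 ≤ p.length := by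
  classical
  have hodd := Nat.odd_iff.1 hp.1
  have hadj : ∀ i < p.length, G.Adj (p.getVert i) (p.getVert (i + 1)) :=
    fun i hi => p.adj_getVert_succ hi
  have h1 : p.length ≠ 1 := by
    intro h
    have := hadj 0 (by omega)
    rw [zero_add, ← h, getVert_length, getVert_zero] at this
    exact this.ne rfl
  have h3 : p.length ≠ 3 := by
    intro h
    refine hG {u, p.getVert 1, p.getVert 2} (is3Clique_triple_iff.2 ⟨?_, ?_, hadj 1 (by omega)⟩)
    · simpa using hadj 0 (by omega)
    · have := hadj 2 (by omega)
      rw [show 2 + 1 = p.length by omega, getVert_length] at this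
      exact this.symm
  omega

lemma card_image_getVert [DecidableEq V] (hp : p.IsShortestOddLoop) :
    #((range p.length).image p.getVert) = p.length := by
  rw [card_image_of_injOn (by simpa using hp.getVert_injOn), card_range]

lemma length_le_card [Fintype V] (hp : p.IsShortestOddLoop) : p.length ≤ Fintype.card V := by
  classical
  exact hp.card_image_getVert ▸ card_le_univ _

lemma card_edgeFinset_le [Fintype V] [DecidableEq V] [DecidableRel G.Adj]
    (hp : p.IsShortestOddLoop) (hG : G.CliqueFree 3) :
    #G.edgeFinset ≤
      p.length + 2 * (Fintype.card V - p.length) + (Fintype.card V - p.length) ^ 2 / 4 := by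
  set S := (range p.length).image p.getVert
  have hS : #Sᶜ = Fintype.card V - p.length := by rw [card_compl, hp.card_image_getVert]
  have hinside : #{e ∈ G.edgeFinset | e.toFinset ⊆ S} ≤ p.length := by
    refine (card_le_card fun e he => ?_).trans (p.length_edges ▸ List.toFinset_card_le p.edges)
    induction e using Sym2.ind with | _ x y => ?_
    simp only [mem_filter, mem_edgeFinset, subset_iff, Sym2.mem_toFinset, Sym2.mem_iff,
      forall_eq_or_imp, forall_eq, S, mem_image, mem_range] at he
    obtain ⟨hxy, ⟨i, hi, rfl⟩, ⟨j, hj, rfl⟩⟩ := he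
    exact List.mem_toFinset.2 (hp.mk_getVert_mem_edges hi hj hxy)
  have hcross : ∀ v, #{w ∈ S | G.Adj v w} ≤ 2 := fun v => by
    rw [filter_image]
    exact card_image_le.trans (hp.card_filter_adj_getVert_le_two (hp.five_le_length hG) v)
  have houtside : #(G.induce (↑Sᶜ : Set V)).edgeFinset ≤ #Sᶜ ^ 2 / 4 := by
    simpa only [coe_sort_coe, Fintype.card_coe] using
      (hG.comap (Embedding.induce (↑Sᶜ : Set V)).isContained).card_edgeFinset_le_sq_div_four
  calc #G.edgeFinset
      ≤ #{e ∈ G.edgeFinset | e.toFinset ⊆ S} + ∑ v ∈ Sᶜ, #{w ∈ S | G.Adj v w} +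
        #(G.induce (↑Sᶜ : Set V)).edgeFinset := card_edgeFinset_le_add_sum_add S
    _ ≤ p.length + ∑ _v ∈ Sᶜ, 2 + #Sᶜ ^ 2 / 4 := by
      gcongr with v
      exact hcross v
    _ = _ := by rw [sum_const, smul_eq_mul, hS, mul_comm]

end Walk.IsShortestOddLoop

theorem CliqueFree.card_edgeFinset_le_of_not_colorable_two [Fintype V] [DecidableRel G.Adj]
    (hG : G.CliqueFree 3) (h : ¬G.Colorable 2) :
    #G.edgeFinset ≤ (Fintype.card V - 1) ^ 2 / 4 + 1 := by
  classical
  obtain ⟨u, p, hp⟩ := exists_isShortestOddLoop h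
  have := Nat.add_two_mul_add_sq_div_four_le (m := Fintype.card V - p.length)
    (hp.five_le_length hG)
  rw [Nat.add_sub_cancel' hp.length_le_card] at this
  exact (hp.card_edgeFinset_le hG).trans this

end SimpleGraph

theorem stmt_12_general (n : ℕ) (G : SimpleGraph (Fin n))
    (hnb : ¬ G.Colorable 2) (he : (n - 1) ^ 2 / 4 + 2 ≤ G.edgeSet.ncard) :
    ∃ w1 w2 w3 : Fin n, G.Adj w1 w2 ∧ G.Adj w2 w3 ∧ G.Adj w3 w1 := by
  classical
  by_contra hno
  have hG : G.CliqueFree 3 := fun s hs => by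
    obtain ⟨a, b, c, hab, hac, hbc, rfl⟩ := SimpleGraph.is3Clique_iff.1 hs
    exact hno ⟨a, b, c, hab, hbc, hac.symm⟩
  have hbound := hG.card_edgeFinset_le_of_not_colorable_two hnb
  rw [← SimpleGraph.coe_edgeFinset, Set.ncard_coe_finset] at he
  rw [Fintype.card_fin] at hbound
  omega

/-- Let `n ≥ 3` and let `G` be a non-bipartite graph on `n` vertices with
`e(G) ≥ ⌊(n-1)²/4⌋ + 2`.  Then `G` contains a triangle (equivalently, a shortest odd cycle
of `G` has length `3`). -/
theorem stmt_12 (n : ℕ) (hn : 3 ≤ n) (G : SimpleGraph (Fin n))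
    (hnb : ¬ G.Colorable 2) (he : (n - 1) ^ 2 / 4 + 2 ≤ G.edgeSet.ncard) :
    ∃ w1 w2 w3 : Fin n, G.Adj w1 w2 ∧ G.Adj w2 w3 ∧ G.Adj w3 w1 :=
  stmt_12_general n G hnb he
end
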